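/- arXiv:1411.1229 — 6 statements merged into one kernel-verified Lean document; each statement's English description precedes it below -/
import Mathlib

section
/- Let 0 < σ_low ≤ σ_high and b : ℝ → ℝ be defined by b(u) = -u for u ≤ -σ_low², b(u) = (σ_low² - u)²/(4σ_low²) for -σ_low² < u < 0, and b(u) = a(√u)² for u ≥ 0, where a(σ) = (σ_low² - σ²)/(2σ_low) for 0 ≤ σ ≤ σ_low, a(σ) = 0 for σ_low ≤ σ ≤ σ_high, and a(σ) = (σ² - σ_high²)/(2σ_high) for σ ≥ σ_high. Then for all real x, y with σ_low ≤ |x| ≤ σ_high, we have b(x² + 2xy) ≤ y². -/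
/-!
Since `(x, y) ↦ (-x, -y)` fixes `u = x² + 2xy`, we may take `σ_low ≤ x ≤ σ_high`.
Below `-σ_low²` the bound is `(x + y)² ≥ 0`. On the two quadratic branches
`b u = ((c² - u) / (2c))²` with `c = σ_low` resp. `c = σ_high`, and the bound reduces to
`|c² - u| ≤ 2c|y|`, which is the sign condition `(x - c) (x + c + 2y) ≥ 0` resp. `≤ 0`;
the second factor is positive because `u` lies above `-σ_low²`.
-/

lemma add_add_two_mul_pos_of_neg_sq_lt {s x y : ℝ} (hs : 0 < s) (hsx : s ≤ x)
    (hu : -s ^ 2 < x ^ 2 + 2 * x * y) : 0 < x + s + 2 * y := by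
  by_contra! h
  nlinarith

lemma div_two_mul_sq_le_of_neg_sq_lt {s x y : ℝ} (hs : 0 < s) (hsx : s ≤ x)
    (hu : -s ^ 2 < x ^ 2 + 2 * x * y) (hu' : x ^ 2 + 2 * x * y ≤ s ^ 2) :
    ((s ^ 2 - (x ^ 2 + 2 * x * y)) / (2 * s)) ^ 2 ≤ y ^ 2 := by
  have hpos := add_add_two_mul_pos_of_neg_sq_lt hs hsx hu
  have hle : (s ^ 2 - (x ^ 2 + 2 * x * y)) / (2 * s) ≤ -y := by
    rw [div_le_iff₀ (by positivity)]
    nlinarith [mul_nonneg (sub_nonneg.2 hsx) hpos.le]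
  simpa using pow_le_pow_left₀ (div_nonneg (by linarith) (by positivity)) hle 2

lemma div_two_mul_sq_le_of_sq_lt {t x y : ℝ} (hx : 0 < x) (hxt : x ≤ t)
    (hu : t ^ 2 < x ^ 2 + 2 * x * y) :
    ((x ^ 2 + 2 * x * y - t ^ 2) / (2 * t)) ^ 2 ≤ y ^ 2 := by
  have ht : 0 < t := hx.trans_le hxt
  have hpos : 0 < x + t + 2 * y := by nlinarith
  have hle : (x ^ 2 + 2 * x * y - t ^ 2) / (2 * t) ≤ y := by
    rw [div_le_iff₀ (by positivity)]
    nlinarith [mul_nonneg (sub_nonneg.2 hxt) hpos.le]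
  exact pow_le_pow_left₀ (div_nonneg (by linarith) (by positivity)) hle 2

section Branches

variable {σlow σhigh u : ℝ} {a b : ℝ → ℝ}

lemma b_eq_of_neg_sq_lt_of_le_sq (hσ0 : 0 < σlow)
    (ha1 : ∀ σ : ℝ, 0 ≤ σ → σ ≤ σlow → a σ = (σlow ^ 2 - σ ^ 2) / (2 * σlow))
    (hb2 : ∀ u : ℝ, -σlow ^ 2 < u → u < 0 → b u = (σlow ^ 2 - u) ^ 2 / (4 * σlow ^ 2))
    (hb3 : ∀ u : ℝ, 0 ≤ u → b u = (a (Real.sqrt u)) ^ 2)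
    (hlow : -σlow ^ 2 < u) (hhigh : u ≤ σlow ^ 2) :
    b u = ((σlow ^ 2 - u) / (2 * σlow)) ^ 2 := by
  rcases lt_or_ge u 0 with hu | hu
  · rw [hb2 u hlow hu]
    field_simp
    ring
  · rw [hb3 u hu, ha1 _ (Real.sqrt_nonneg u) (Real.sqrt_le_left hσ0.le |>.2 hhigh),
      Real.sq_sqrt hu]

lemma b_eq_zero_of_sq_le_of_le_sq (hσ0 : 0 < σlow) (hσh : 0 < σhigh)
    (ha2 : ∀ σ : ℝ, σlow ≤ σ → σ ≤ σhigh → a σ = 0)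
    (hb3 : ∀ u : ℝ, 0 ≤ u → b u = (a (Real.sqrt u)) ^ 2)
    (hlow : σlow ^ 2 ≤ u) (hhigh : u ≤ σhigh ^ 2) :
    b u = 0 := by
  rw [hb3 u ((sq_nonneg σlow).trans hlow),
    ha2 _ ((Real.le_sqrt' hσ0).2 hlow) ((Real.sqrt_le_left hσh.le).2 hhigh), zero_pow two_ne_zero]

lemma b_eq_of_sq_le (hσh : 0 < σhigh)
    (ha3 : ∀ σ : ℝ, σhigh ≤ σ → a σ = (σ ^ 2 - σhigh ^ 2) / (2 * σhigh))
    (hb3 : ∀ u : ℝ, 0 ≤ u → b u = (a (Real.sqrt u)) ^ 2)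
    (hhigh : σhigh ^ 2 ≤ u) :
    b u = ((u - σhigh ^ 2) / (2 * σhigh)) ^ 2 := by
  have hu : 0 ≤ u := (sq_nonneg σhigh).trans hhigh
  rw [hb3 u hu, ha3 _ ((Real.le_sqrt' hσh).2 hhigh), Real.sq_sqrt hu]

end Branches

theorem stmt_0_general (σlow σhigh : ℝ) (hσ0 : 0 < σlow)
    (a b : ℝ → ℝ)
    (ha1 : ∀ σ : ℝ, 0 ≤ σ → σ ≤ σlow → a σ = (σlow ^ 2 - σ ^ 2) / (2 * σlow))
    (ha2 : ∀ σ : ℝ, σlow ≤ σ → σ ≤ σhigh → a σ = 0)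
    (ha3 : ∀ σ : ℝ, σhigh ≤ σ → a σ = (σ ^ 2 - σhigh ^ 2) / (2 * σhigh))
    (hb1 : ∀ u : ℝ, u ≤ -σlow ^ 2 → b u = -u)
    (hb2 : ∀ u : ℝ, -σlow ^ 2 < u → u < 0 → b u = (σlow ^ 2 - u) ^ 2 / (4 * σlow ^ 2))
    (hb3 : ∀ u : ℝ, 0 ≤ u → b u = (a (Real.sqrt u)) ^ 2) :
    ∀ x y : ℝ, σlow ≤ |x| → |x| ≤ σhigh → b (x ^ 2 + 2 * x * y) ≤ y ^ 2 := by
  intro x y hx1 hx2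
  wlog hx : 0 ≤ x generalizing x y with H
  · simpa using H (-x) (-y) (by rwa [abs_neg]) (by rwa [abs_neg]) (by linarith)
  rw [abs_of_nonneg hx] at hx1 hx2
  have hσh : 0 < σhigh := hσ0.trans_le (hx1.trans hx2)
  rcases le_or_gt (x ^ 2 + 2 * x * y) (-σlow ^ 2) with h₁ | h₁
  · rw [hb1 _ h₁]
    nlinarith [sq_nonneg (x + y)]
  rcases le_or_gt (x ^ 2 + 2 * x * y) (σlow ^ 2) with h₂ | h₂
  · rw [b_eq_of_neg_sq_lt_of_le_sq hσ0 ha1 hb2 hb3 h₁ h₂]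
    exact div_two_mul_sq_le_of_neg_sq_lt hσ0 hx1 h₁ h₂
  rcases le_or_gt (x ^ 2 + 2 * x * y) (σhigh ^ 2) with h₃ | h₃
  · rw [b_eq_zero_of_sq_le_of_le_sq hσ0 hσh ha2 hb3 h₂.le h₃]
    positivity
  · rw [b_eq_of_sq_le hσh ha3 hb3 h₃.le]
    exact div_two_mul_sq_le_of_sq_lt (hσ0.trans_le hx1) hx2 h₃

/-- Lemma 3.17 of the paper: for `σ_low ≤ |x| ≤ σ_high`, `b (x² + 2xy) ≤ y²`. -/
theorem stmt_0 (σlow σhigh : ℝ) (hσ0 : 0 < σlow) (hσ : σlow ≤ σhigh)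
    (a b : ℝ → ℝ)
    (ha1 : ∀ σ : ℝ, 0 ≤ σ → σ ≤ σlow → a σ = (σlow ^ 2 - σ ^ 2) / (2 * σlow))
    (ha2 : ∀ σ : ℝ, σlow ≤ σ → σ ≤ σhigh → a σ = 0)
    (ha3 : ∀ σ : ℝ, σhigh ≤ σ → a σ = (σ ^ 2 - σhigh ^ 2) / (2 * σhigh))
    (hb1 : ∀ u : ℝ, u ≤ -σlow ^ 2 → b u = -u)
    (hb2 : ∀ u : ℝ, -σlow ^ 2 < u → u < 0 → b u = (σlow ^ 2 - u) ^ 2 / (4 * σlow ^ 2))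
    (hb3 : ∀ u : ℝ, 0 ≤ u → b u = (a (Real.sqrt u)) ^ 2) :
    ∀ x y : ℝ, σlow ≤ |x| → |x| ≤ σhigh → b (x ^ 2 + 2 * x * y) ≤ y ^ 2 :=
  stmt_0_general σlow σhigh hσ0 a b ha1 ha2 ha3 hb1 hb2 hb3
end

section
/- Let 0 ≤ σ_low ≤ σ_high, and for m = 1,…,N let x_m ∈ ℝ with σ_low ≤ |x_m| ≤ σ_high, and let λ_m^{(+1)}, λ_m^{(-1)} ≥ 0 be the unique weights with λ_m^{(+1)} + λ_m^{(-1)} = 1 and e^{x_m} = λ_m^{(+1)} e^{σ_high} + λ_m^{(-1)} e^{-σ_high}. For s₀ > 0 and n ≤ N, define S_n = s₀ ∏_{m=1}^n e^{x_m} and, for ω̄ ∈ {-1,+1}^N, S̄_n(ω̄) = s₀ ∏_{m=1}^n e^{σ_high ω̄_m} and λ^{ω̄} = ∏_{m=1}^N λ_m^{(ω̄_m)}. Then S_n = ∑_{ω̄ ∈ {-1,+1}^N} S̄_n(ω̄) λ^{ω̄} for every n = 0,…,N. -/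
open Finset

/-- Representation of the stock price with uncertain returns as a mixture of binomial
stock prices with volatility `σ_high` (equation (2.7) of the paper). -/
theorem stmt_4 (N : ℕ) (σlow σhigh s0 : ℝ) (hσ0 : 0 ≤ σlow) (hσ : σlow ≤ σhigh)
    (hs0 : 0 < s0)
    (x : Fin N → ℝ) (hx : ∀ m, σlow ≤ |x m| ∧ |x m| ≤ σhigh)
    (lam : Fin N → Bool → ℝ)
    (hnn : ∀ m b, 0 ≤ lam m b)
    (hsum : ∀ m, lam m true + lam m false = 1)
    (hrep : ∀ m, Real.exp (x m)
      = lam m true * Real.exp σhigh + lam m false * Real.exp (-σhigh)) :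
    ∀ n : ℕ, n ≤ N →
      s0 * ∏ m ∈ Finset.univ.filter (fun m : Fin N => (m : ℕ) < n), Real.exp (x m)
        = ∑ ω : Fin N → Bool,
            (s0 * ∏ m ∈ Finset.univ.filter (fun m : Fin N => (m : ℕ) < n),
                Real.exp (σhigh * (if ω m then 1 else -1)))
              * ∏ m : Fin N, lam m (ω m) := by
  intro n hn
  set g : Fin N → Bool → ℝ := fun m b =>
    (if (m : ℕ) < n then Real.exp (σhigh * (if b then 1 else -1)) else 1) * lam m b with hg
  have key : ∀ ω : Fin N → Bool,
      (∏ m ∈ Finset.univ.filter (fun m : Fin N => (m : ℕ) < n),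
          Real.exp (σhigh * (if ω m then 1 else -1))) * ∏ m : Fin N, lam m (ω m)
        = ∏ m : Fin N, g m (ω m) := by
    intro ω
    rw [hg, Finset.prod_filter, ← Finset.prod_mul_distrib]
  calc s0 * ∏ m ∈ Finset.univ.filter (fun m : Fin N => (m : ℕ) < n), Real.exp (x m)
      = s0 * ∏ m : Fin N, (∑ b : Bool, g m b) := by
        congr 1
        rw [Finset.prod_filter]
        refine Finset.prod_congr rfl fun m _ => ?_
        by_cases h : (m : ℕ) < n
        · simp only [hg, h, if_true, Fintype.sum_bool]
          rw [hrep m]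
          norm_num [mul_comm]
        · simp [hg, h, Fintype.sum_bool, hsum m]
    _ = s0 * ∑ ω ∈ Fintype.piFinset (fun _ : Fin N => (Finset.univ : Finset Bool)),
          ∏ m : Fin N, g m (ω m) := by rw [Finset.prod_univ_sum]
    _ = ∑ ω : Fin N → Bool,
            (s0 * ∏ m ∈ Finset.univ.filter (fun m : Fin N => (m : ℕ) < n),
                Real.exp (σhigh * (if ω m then 1 else -1)))
              * ∏ m : Fin N, lam m (ω m) := by
        rw [Fintype.piFinset_univ, Finset.mul_sum]
        refine Finset.sum_congr rfl fun ω _ => ?_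
        rw [mul_assoc, key ω]
end

section
/- In the N-period model with log-returns bounded by σ_high in absolute value and nonnegative transaction costs, suppose the strategy π = (y, γ) with y ≤ A super-replicates a nonnegative claim, i.e., its mark-to-market value Y^π_n ≥ 0 for all n (along every admissible scenario). Then for every n, Y^π_n ≤ A(1 + e^{σ_high})^n and |γ_n| ≤ A(1 + e^{σ_high})^n / ((1 - e^{-σ_high}) S_n), where S_n ≥ s₀ e^{-σ_high N}. In particular the positions γ_n are uniformly bounded by A(1 + e^{σ_high})^N / ((1 - e^{-σ_high}) s₀ e^{-σ_high N}). -/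
/-!
A price move of relative size `e^{±σhigh} - 1` is possible in every period, and the position
`γ_n` is fixed before the move is revealed. Super-replication must survive both the up and the
down move, so the wealth `W` available at time `n` bounds the position:
`|γ_n| (1 - e^{-σhigh}) S_n ≤ W`. Consequently one period raises the wealth by at most
`|γ_n| S_n (e^{σhigh} - 1) ≤ e^{σhigh} W`, which gives the geometric bound on the wealth by
induction, and the bound on the positions follows together with `S_n ≥ s₀ e^{-σhigh N}`.
-/

open Finset

/-- The stock price in the `N`-period model. -/
noncomputable def stock11 (N : ℕ) (s0 : ℝ) (ω : Fin N → ℝ) (n : ℕ) : ℝ :=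
  s0 * Real.exp (∑ m ∈ Finset.univ.filter (fun m : Fin N => (m : ℕ) < n), ω m)

/-- A strategy is adapted if its position at time `n` depends only on the first `n`
returns. -/
def adapted11 (N : ℕ) (γ : ℕ → (Fin N → ℝ) → ℝ) : Prop :=
  ∀ n : ℕ, ∀ ω ω' : Fin N → ℝ, (∀ m : Fin N, (m : ℕ) < n → ω m = ω' m) → γ n ω = γ n ω'

/-- The mark-to-market wealth of the strategy `(y, γ)` after `n` trading periods. -/
noncomputable def wealth11 (N : ℕ) (s0 : ℝ) (g : ℕ → (Fin N → ℝ) → ℝ → ℝ)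
    (y : ℝ) (γ : ℕ → (Fin N → ℝ) → ℝ) (ω : Fin N → ℝ) (n : ℕ) : ℝ :=
  y + ∑ k ∈ Finset.range n,
    (γ k ω * (stock11 N s0 ω (k + 1) - stock11 N s0 ω k)
      - g k ω ((γ k ω - (if k = 0 then 0 else γ (k - 1) ω)) * stock11 N s0 ω k))

open Real

section Exp

lemma exp_sub_one_eq_exp_mul_one_sub_exp_neg (x : ℝ) : exp x - 1 = exp x * (1 - exp (-x)) := by
  rw [mul_sub, mul_one, ← exp_add, add_neg_cancel, exp_zero]

lemma one_sub_exp_neg_le_exp_sub_one {x : ℝ} (hx : 0 ≤ x) : 1 - exp (-x) ≤ exp x - 1 := by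
  rw [exp_sub_one_eq_exp_mul_one_sub_exp_neg]
  have : 0 ≤ 1 - exp (-x) := by linarith [exp_le_one_iff.2 (neg_nonpos.2 hx)]
  exact le_mul_of_one_le_left this (one_le_exp hx)

lemma abs_exp_sub_one_le_exp_sub_one {x σ : ℝ} (hx : |x| ≤ σ) : |exp x - 1| ≤ exp σ - 1 := by
  obtain ⟨hlo, hhi⟩ := abs_le.1 hx
  have hdown : exp (-σ) ≤ exp x := exp_le_exp.2 (by linarith)
  have hgap := one_sub_exp_neg_le_exp_sub_one ((abs_nonneg x).trans hx)
  exact abs_le.2 ⟨by linarith, by linarith [exp_le_exp.2 hhi]⟩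

lemma abs_mul_one_sub_exp_neg_le {σ W a : ℝ} (hσ : 0 ≤ σ)
    (hup : 0 ≤ W + a * (exp σ - 1)) (hdown : 0 ≤ W + a * (exp (-σ) - 1)) :
    |a| * (1 - exp (-σ)) ≤ W := by
  rcases abs_cases a with ⟨ha, -⟩ | ⟨ha, hneg⟩
  · rw [ha]
    linarith
  · rw [ha]
    have := mul_le_mul_of_nonneg_left (one_sub_exp_neg_le_exp_sub_one hσ) (neg_nonneg.2 hneg.le)
    linarith

end Exp

section Model

variable {N : ℕ} {s0 : ℝ}

def admissible11 (σlow σhigh : ℝ) (ω : Fin N → ℝ) : Prop :=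
  ∀ m, σlow ≤ |ω m| ∧ |ω m| ≤ σhigh

lemma admissible11.update {σlow σhigh c : ℝ} {ω : Fin N → ℝ} (hω : admissible11 σlow σhigh ω)
    (hσ : σlow ≤ σhigh) (hc : |c| = σhigh) (i : Fin N) :
    admissible11 σlow σhigh (Function.update ω i c) := by
  intro m
  rcases eq_or_ne m i with rfl | hm
  · rw [Function.update_self, hc]
    exact ⟨hσ, le_rfl⟩
  · rw [Function.update_of_ne hm]
    exact hω m

lemma stock11_nonneg (hs0 : 0 ≤ s0) (ω : Fin N → ℝ) (n : ℕ) : 0 ≤ stock11 N s0 ω n :=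
  mul_nonneg hs0 (exp_pos _).le

lemma stock11_succ (ω : Fin N → ℝ) {n : ℕ} (hn : n < N) :
    stock11 N s0 ω (n + 1) = stock11 N s0 ω n * exp (ω ⟨n, hn⟩) := by
  have hfilter : univ.filter (fun m : Fin N => (m : ℕ) < n + 1)
      = insert ⟨n, hn⟩ (univ.filter fun m : Fin N => (m : ℕ) < n) := by
    ext m
    simp only [mem_filter, mem_insert, mem_univ, true_and, Fin.ext_iff]
    omega
  rw [stock11, stock11, hfilter, sum_insert (by simp), exp_add]
  ring

lemma stock11_update_of_le (ω : Fin N → ℝ) (i : Fin N) (c : ℝ) {n : ℕ} (hn : n ≤ i) :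
    stock11 N s0 (Function.update ω i c) n = stock11 N s0 ω n := by
  refine congrArg (s0 * exp ·) (sum_congr rfl fun m hm => Function.update_of_ne ?_ _ _)
  exact Fin.ne_of_lt (Fin.lt_def.2 ((mem_filter.1 hm).2.trans_le hn))

lemma mul_exp_neg_le_stock11 {σ : ℝ} (hs0 : 0 ≤ s0) (hσ : 0 ≤ σ) {ω : Fin N → ℝ}
    (hω : ∀ m, |ω m| ≤ σ) (n : ℕ) : s0 * exp (-(σ * N)) ≤ stock11 N s0 ω n := by
  refine mul_le_mul_of_nonneg_left (exp_le_exp.2 ?_) hs0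
  set F := univ.filter fun m : Fin N => (m : ℕ) < n
  have hcard : (F.card : ℝ) ≤ N := by
    exact_mod_cast (card_filter_le _ _).trans (card_fin N).le
  calc -(σ * N) ≤ F.card • (-σ) := by
        rw [nsmul_eq_mul]
        nlinarith
    _ ≤ ∑ m ∈ F, ω m := card_nsmul_le_sum F ω (-σ) fun m _ => (abs_le.1 (hω m)).1

variable {g : ℕ → (Fin N → ℝ) → ℝ → ℝ} {y : ℝ} {γ : ℕ → (Fin N → ℝ) → ℝ}

lemma wealth11_succ_le (hg : ∀ n ω β, 0 ≤ g n ω β) (ω : Fin N → ℝ) {n : ℕ} (hn : n < N) :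
    wealth11 N s0 g y γ ω (n + 1)
      ≤ wealth11 N s0 g y γ ω n + γ n ω * stock11 N s0 ω n * (exp (ω ⟨n, hn⟩) - 1) := by
  unfold wealth11
  rw [sum_range_succ, stock11_succ ω hn]
  linarith [hg n ω ((γ n ω - if n = 0 then 0 else γ (n - 1) ω) * stock11 N s0 ω n)]

/-- Changing the return of period `n` to `±σhigh` leaves `γ_n` and `S_n` unchanged, so
the survival of both scenarios bounds `γ_n`. The bound `W` is required on all scenarios since
the costs `g` may depend on the whole path, so the change can alter the wealth at time `n`. -/
lemma abs_mul_le_of_wealth11_le {σlow σhigh W : ℝ} (hs0 : 0 ≤ s0) (hσ : σlow ≤ σhigh)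
    (hσh : 0 ≤ σhigh) (hg : ∀ n ω β, 0 ≤ g n ω β) (hγ : adapted11 N γ) {n : ℕ} (hn : n < N)
    (hW : ∀ ω, admissible11 σlow σhigh ω → wealth11 N s0 g y γ ω n ≤ W)
    (hnext : ∀ ω, admissible11 σlow σhigh ω → 0 ≤ wealth11 N s0 g y γ ω (n + 1))
    {ω : Fin N → ℝ} (hω : admissible11 σlow σhigh ω) :
    |γ n ω| * ((1 - exp (-σhigh)) * stock11 N s0 ω n) ≤ W := by
  have hsurvive : ∀ c, |c| = σhigh → 0 ≤ W + γ n ω * stock11 N s0 ω n * (exp c - 1) := by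
    intro c hc
    set ω' := Function.update ω ⟨n, hn⟩ c
    have hω' : admissible11 σlow σhigh ω' := hω.update hσ hc _
    have hγ' : γ n ω' = γ n ω :=
      hγ n ω' ω fun m hm => Function.update_of_ne (Fin.ne_of_lt hm) _ _
    have hS' : stock11 N s0 ω' n = stock11 N s0 ω n := stock11_update_of_le ω _ c le_rfl
    have hx' : ω' ⟨n, hn⟩ = c := Function.update_self _ _ _
    calc 0 ≤ wealth11 N s0 g y γ ω' (n + 1) := hnext ω' hω'
      _ ≤ wealth11 N s0 g y γ ω' n + γ n ω' * stock11 N s0 ω' n * (exp (ω' ⟨n, hn⟩) - 1) :=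
        wealth11_succ_le hg ω' hn
      _ ≤ W + γ n ω * stock11 N s0 ω n * (exp c - 1) := by
        rw [hγ', hS', hx']
        exact add_le_add_left (hW ω' hω') _
  have hbound := abs_mul_one_sub_exp_neg_le hσh (hsurvive σhigh (abs_of_nonneg hσh))
    (hsurvive (-σhigh) (by rw [abs_neg, abs_of_nonneg hσh]))
  rw [abs_mul, abs_of_nonneg (stock11_nonneg hs0 ω n)] at hbound
  linarith

lemma wealth11_le {σlow σhigh A : ℝ} (hs0 : 0 ≤ s0) (hσ : σlow ≤ σhigh) (hσh : 0 ≤ σhigh)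
    (hy : y ≤ A) (hg : ∀ n ω β, 0 ≤ g n ω β) (hγ : adapted11 N γ)
    (hsuper : ∀ ω, admissible11 σlow σhigh ω → ∀ n ≤ N, 0 ≤ wealth11 N s0 g y γ ω n) :
    ∀ n ≤ N, ∀ ω, admissible11 σlow σhigh ω →
      wealth11 N s0 g y γ ω n ≤ A * (1 + exp σhigh) ^ n := by
  intro n
  induction n with
  | zero =>
    intro _ _ _
    simpa [wealth11] using hy
  | succ n ih =>
    intro hn ω hω
    replace hn : n < N := hn
    set W := A * (1 + exp σhigh) ^ n
    set S := stock11 N s0 ω n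
    have hγn : |γ n ω| * ((1 - exp (-σhigh)) * S) ≤ W :=
      abs_mul_le_of_wealth11_le hs0 hσ hσh hg hγ hn (ih hn.le) (fun ω hω => hsuper ω hω _ hn) hω
    have hmove : |exp (ω ⟨n, hn⟩) - 1| ≤ exp σhigh - 1 :=
      abs_exp_sub_one_le_exp_sub_one (hω _).2
    calc wealth11 N s0 g y γ ω (n + 1)
        ≤ W + γ n ω * S * (exp (ω ⟨n, hn⟩) - 1) :=
          (wealth11_succ_le hg ω hn).trans (add_le_add_left (ih hn.le ω hω) _)
      _ ≤ W + |γ n ω| * S * (exp σhigh - 1) := by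
          refine add_le_add_right ?_ _
          calc γ n ω * S * (exp (ω ⟨n, hn⟩) - 1)
              ≤ |γ n ω * S * (exp (ω ⟨n, hn⟩) - 1)| := le_abs_self _
            _ ≤ |γ n ω| * S * (exp σhigh - 1) := by
              rw [abs_mul, abs_mul, abs_of_nonneg (stock11_nonneg hs0 ω n)]
              gcongr
              exact mul_nonneg (abs_nonneg _) (stock11_nonneg hs0 ω n)
      _ = W + exp σhigh * (|γ n ω| * ((1 - exp (-σhigh)) * S)) := by
          rw [exp_sub_one_eq_exp_mul_one_sub_exp_neg]
          ring
      _ ≤ W + exp σhigh * W := by gcongr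
      _ = A * (1 + exp σhigh) ^ (n + 1) := by ring

end Model

theorem stmt_11_general (N : ℕ) (s0 σlow σhigh A y : ℝ)
    (hs0 : 0 < s0) (hσ : σlow ≤ σhigh) (hσh : 0 < σhigh)
    (hA : 0 < A) (hy : y ≤ A)
    (g : ℕ → (Fin N → ℝ) → ℝ → ℝ) (hg : ∀ n ω β, 0 ≤ g n ω β)
    (γ : ℕ → (Fin N → ℝ) → ℝ) (hγ : adapted11 N γ)
    (hsuper : ∀ ω : Fin N → ℝ, (∀ m, σlow ≤ |ω m| ∧ |ω m| ≤ σhigh) →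
      ∀ n : ℕ, n ≤ N → 0 ≤ wealth11 N s0 g y γ ω n) :
    ∀ ω : Fin N → ℝ, (∀ m, σlow ≤ |ω m| ∧ |ω m| ≤ σhigh) →
      ∀ n : ℕ, n ≤ N →
        wealth11 N s0 g y γ ω n ≤ A * (1 + Real.exp σhigh) ^ n ∧
        s0 * Real.exp (-(σhigh * N)) ≤ stock11 N s0 ω n ∧
        (n < N →
          |γ n ω| ≤ A * (1 + Real.exp σhigh) ^ n
            / ((1 - Real.exp (-σhigh)) * stock11 N s0 ω n) ∧
          |γ n ω| ≤ A * (1 + Real.exp σhigh) ^ N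
            / ((1 - Real.exp (-σhigh)) * s0 * Real.exp (-(σhigh * N)))) := by
  intro ω hω n hn
  have hwealth := wealth11_le hs0.le hσ hσh.le hy hg hγ hsuper
  have hlb := mul_exp_neg_le_stock11 hs0.le hσh.le (fun m => (hω m).2) n
  refine ⟨hwealth n hn ω hω, hlb, fun hnN => ?_⟩
  have hgap : 0 < 1 - exp (-σhigh) := sub_pos.2 (exp_lt_one_iff.2 (neg_lt_zero.2 hσh))
  have hγn : |γ n ω| ≤ A * (1 + exp σhigh) ^ n / ((1 - exp (-σhigh)) * stock11 N s0 ω n) :=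
    (le_div_iff₀ (mul_pos hgap (mul_pos hs0 (exp_pos _)))).2 <|
      abs_mul_le_of_wealth11_le hs0.le hσ hσh.le hg hγ hnN (hwealth n hn)
        (fun ω hω => hsuper ω hω _ hnN) hω
  refine ⟨hγn, hγn.trans ?_⟩
  rw [mul_assoc]
  gcongr
  exact le_add_of_nonneg_right (exp_pos _).le

/-- Uniform bounds on the wealth and the positions of a super-replicating strategy
(inequality (3.4) of the paper). -/
theorem stmt_11 (N : ℕ) (s0 σlow σhigh A y : ℝ)
    (hs0 : 0 < s0) (hσ0 : 0 ≤ σlow) (hσ : σlow ≤ σhigh) (hσh : 0 < σhigh)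
    (hA : 0 < A) (hy : y ≤ A)
    (g : ℕ → (Fin N → ℝ) → ℝ → ℝ) (hg : ∀ n ω β, 0 ≤ g n ω β)
    (γ : ℕ → (Fin N → ℝ) → ℝ) (hγ : adapted11 N γ)
    (hsuper : ∀ ω : Fin N → ℝ, (∀ m, σlow ≤ |ω m| ∧ |ω m| ≤ σhigh) →
      ∀ n : ℕ, n ≤ N → 0 ≤ wealth11 N s0 g y γ ω n) :
    ∀ ω : Fin N → ℝ, (∀ m, σlow ≤ |ω m| ∧ |ω m| ≤ σhigh) →
      ∀ n : ℕ, n ≤ N →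
        wealth11 N s0 g y γ ω n ≤ A * (1 + Real.exp σhigh) ^ n ∧
        s0 * Real.exp (-(σhigh * N)) ≤ stock11 N s0 ω n ∧
        (n < N →
          |γ n ω| ≤ A * (1 + Real.exp σhigh) ^ n
            / ((1 - Real.exp (-σhigh)) * stock11 N s0 ω n) ∧
          |γ n ω| ≤ A * (1 + Real.exp σhigh) ^ N
            / ((1 - Real.exp (-σhigh)) * s0 * Real.exp (-(σhigh * N)))) :=
  stmt_11_general N s0 σlow σhigh A y hs0 hσ hσh hA hy g hg γ hγ hsuper
end

section
/- Suppose the cost functions g_n : ℝ → [0,∞) are deterministic (independent of the scenario), convex, with g_n(0) = 0. If the payoff F : ℝ₊^{N+1} → ℝ₊ is convex, then the robust super-replication price in the uncertain volatility model with bounds 0 ≤ σ_low ≤ σ_high equals the super-replication price in the binomial model with volatility σ_high and the same cost functions: V^{σ_low,σ_high}_g(F) = V^{σ_high,σ_high}_g(F). -/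
open Finset

/-- The stock price in the `N`-period model. -/
noncomputable def stock14 (N : ℕ) (s0 : ℝ) (ω : Fin N → ℝ) (n : ℕ) : ℝ :=
  s0 * Real.exp (∑ m ∈ Finset.univ.filter (fun m : Fin N => (m : ℕ) < n), ω m)

/-- A strategy is adapted if its position at time `n` depends only on the first `n`
returns. -/
def adapted14 (N : ℕ) (γ : ℕ → (Fin N → ℝ) → ℝ) : Prop :=
  ∀ n : ℕ, ∀ ω ω' : Fin N → ℝ, (∀ m : Fin N, (m : ℕ) < n → ω m = ω' m) → γ n ω = γ n ω'

/-- The terminal mark-to-market wealth of the strategy `(y, γ)` with deterministic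
cost functions `g`. -/
noncomputable def wealth14 (N : ℕ) (s0 : ℝ) (g : ℕ → ℝ → ℝ)
    (y : ℝ) (γ : ℕ → (Fin N → ℝ) → ℝ) (ω : Fin N → ℝ) : ℝ :=
  y + ∑ k ∈ Finset.range N,
    (γ k ω * (stock14 N s0 ω (k + 1) - stock14 N s0 ω k)
      - g k ((γ k ω - (if k = 0 then 0 else γ (k - 1) ω)) * stock14 N s0 ω k))

/-- The robust super-replication price of the payoff `F` with volatility bounds
`lo ≤ |x_n| ≤ hi`. -/
noncomputable def price14 (N : ℕ) (s0 : ℝ) (g : ℕ → ℝ → ℝ)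
    (F : (Fin (N + 1) → ℝ) → ℝ) (lo hi : ℝ) : ℝ :=
  sInf {y : ℝ | ∃ γ : ℕ → (Fin N → ℝ) → ℝ, adapted14 N γ ∧
    ∀ ω : Fin N → ℝ, (∀ m, lo ≤ |ω m| ∧ |ω m| ≤ hi) →
      F (fun i : Fin (N + 1) => stock14 N s0 ω i) ≤ wealth14 N s0 g y γ ω}

/-!
Fix `σ > 0` and a path `ω` with `|ω m| ≤ σ`. Toss independent coins, the `m`-th showing heads with
probability `(exp (ω m) - exp (-σ)) / (exp σ - exp (-σ))`, and follow the binomial path with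
returns `±σ`. Then `exp (±σ)` averages to `exp (ω m)` coin by coin, so the binomial stock price
averages to the price along `ω` at every time. Given a strategy `γ` super-replicating `F` on the
binomial paths, hold along `ω` the position whose dollar value is the average of the dollar
values of `γ`. It is adapted, its trading gains are the average of the binomial gains, and by
Jensen its costs are at most the average binomial costs, while `F` along `ω` is at most the
average of `F` over binomial paths. So it super-replicates `F` along `ω`; the converse is trivial
since the binomial paths are admissible.
-/
open Function Real

section CoinWeight

variable {ι : Type*} [Fintype ι]

def coinProb (a : ℝ) (b : Bool) : ℝ :=
  if b then a else 1 - a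

def coinWeight (p : ι → ℝ) (ε : ι → Bool) : ℝ :=
  ∏ i, coinProb (p i) (ε i)

lemma coinWeight_nonneg {p : ι → ℝ} (hp : ∀ i, p i ∈ Set.Icc 0 1) (ε : ι → Bool) :
    0 ≤ coinWeight p ε :=
  prod_nonneg fun i _ => by unfold coinProb; split_ifs <;> linarith [(hp i).1, (hp i).2]

variable [DecidableEq ι]

lemma sum_coinWeight (p : ι → ℝ) : ∑ ε, coinWeight p ε = 1 := by
  simp only [coinWeight]
  rw [← Fintype.prod_sum fun i => coinProb (p i)]
  simp [coinProb]

lemma sum_apply_mul_of_update_invariant (j : ι) (φ : Bool → ℝ) {K : (ι → Bool) → ℝ}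
    (hK : ∀ ε b, K (update ε j b) = K ε) :
    ∑ ε, φ (ε j) * K ε = (φ false + φ true) / 2 * ∑ ε, K ε := by
  have hflip : Involutive fun ε : ι → Bool => update ε j (!ε j) := fun ε => by simp
  -- flipping the `j`-th coin is a bijection of the index set that fixes `K`
  have hswap : ∑ ε, φ (ε j) * K ε = ∑ ε, φ (!ε j) * K ε := by
    rw [← Equiv.sum_comp (hflip.toPerm _)]
    simp [hK]
  have hpair : ∀ b, φ b + φ (!b) = φ false + φ true := by
    intro b; cases b <;> simp [add_comm]
  calc ∑ ε, φ (ε j) * K ε = (∑ ε, φ (ε j) * K ε + ∑ ε, φ (!ε j) * K ε) / 2 := by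
        rw [← hswap]; ring
    _ = (φ false + φ true) / 2 * ∑ ε, K ε := by
        simp only [← sum_add_distrib, ← add_mul, hpair, ← mul_sum]; ring

lemma sum_coinWeight_mul_eq_half_mul (p : ι → ℝ) (j : ι) (G : Bool → ℝ)
    {H : (ι → Bool) → ℝ} (hH : ∀ ε b, H (update ε j b) = H ε) :
    ∑ ε, coinWeight p ε * (H ε * G (ε j)) = ((1 - p j) * G false + p j * G true) / 2 *
      ∑ ε, (∏ i ∈ univ.erase j, coinProb (p i) (ε i)) * H ε := by
  have hrest : ∀ (ε : ι → Bool) (b : Bool), ∏ i ∈ univ.erase j, coinProb (p i) (update ε j b i)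
      = ∏ i ∈ univ.erase j, coinProb (p i) (ε i) := fun ε b =>
    prod_congr rfl fun i hi => by rw [update_of_ne (ne_of_mem_erase hi)]
  have hsplit : ∀ ε, coinWeight p ε * (H ε * G (ε j))
      = coinProb (p j) (ε j) * G (ε j) * ((∏ i ∈ univ.erase j, coinProb (p i) (ε i)) * H ε) :=
    fun ε => by rw [coinWeight, ← mul_prod_erase univ _ (mem_univ j)]; ring
  rw [sum_congr rfl fun ε _ => hsplit ε,
    sum_apply_mul_of_update_invariant j (fun b => coinProb (p j) b * G b)
      fun ε b => by rw [hrest, hH]]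
  simp [coinProb]

lemma sum_coinWeight_mul_apply (p : ι → ℝ) (j : ι) (G : Bool → ℝ)
    {H : (ι → Bool) → ℝ} (hH : ∀ ε b, H (update ε j b) = H ε) :
    ∑ ε, coinWeight p ε * (H ε * G (ε j))
      = ((1 - p j) * G false + p j * G true) * ∑ ε, coinWeight p ε * H ε := by
  have h1 := sum_coinWeight_mul_eq_half_mul p j (fun _ => 1) hH
  simp only [mul_one] at h1
  rw [sum_coinWeight_mul_eq_half_mul p j G hH, h1]
  ring

lemma sum_coinWeight_update_mul (p : ι → ℝ) (j : ι) (a : ℝ)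
    {H : (ι → Bool) → ℝ} (hH : ∀ ε b, H (update ε j b) = H ε) :
    ∑ ε, coinWeight (update p j a) ε * H ε = ∑ ε, coinWeight p ε * H ε := by
  have h1 := fun q => sum_coinWeight_mul_eq_half_mul q j (fun _ => 1) hH
  simp only [mul_one] at h1
  rw [h1, h1]
  have hrest : ∀ ε : ι → Bool, ∏ i ∈ univ.erase j, coinProb (update p j a i) (ε i)
      = ∏ i ∈ univ.erase j, coinProb (p i) (ε i) := fun ε =>
    prod_congr rfl fun i hi => by rw [update_of_ne (ne_of_mem_erase hi)]
  simp only [hrest]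
  ring

lemma sum_coinWeight_mul_congr (s : Finset ι) {p q : ι → ℝ} (hpq : ∀ i ∉ s, p i = q i)
    {H : (ι → Bool) → ℝ} (hH : ∀ i ∈ s, ∀ ε b, H (update ε i b) = H ε) :
    ∑ ε, coinWeight p ε * H ε = ∑ ε, coinWeight q ε * H ε := by
  induction s using Finset.induction_on generalizing p with
  | empty => rw [funext fun i => hpq i (notMem_empty i)]
  | insert j s hj ih =>
    rw [← sum_coinWeight_update_mul p j (q j) (hH j (mem_insert_self j s))]
    refine ih (fun i hi => ?_) fun i hi => hH i (mem_insert_of_mem hi)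
    by_cases hij : i = j
    · simp [hij]
    · simpa [update_of_ne hij] using hpq i (by simp [hij, hi])

end CoinWeight

section BinomialAverage

variable {ι : Type*} [Fintype ι] [DecidableEq ι]

def binomialPath (σ : ℝ) (ε : ι → Bool) : ι → ℝ :=
  fun i => if ε i then σ else -σ

omit [Fintype ι] [DecidableEq ι] in
lemma abs_binomialPath {σ : ℝ} (hσ : 0 ≤ σ) (ε : ι → Bool) (i : ι) :
    |binomialPath σ ε i| = σ := by
  unfold binomialPath; split_ifs <;> simp [abs_of_nonneg hσ]

/-- The probability of an up-move `σ` against a down-move `-σ` for which the expected growth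
factor `exp (±σ)` equals `exp x`. -/
noncomputable def upProb (σ x : ℝ) : ℝ :=
  (exp x - exp (-σ)) / (exp σ - exp (-σ))

lemma upProb_mem_Icc {σ x : ℝ} (hσ : 0 < σ) (hx : |x| ≤ σ) : upProb σ x ∈ Set.Icc 0 1 := by
  have hD : exp (-σ) < exp σ := exp_lt_exp.2 (by linarith)
  obtain ⟨hlo, hhi⟩ := abs_le.1 hx
  have := exp_le_exp.2 hlo
  have := exp_le_exp.2 hhi
  exact ⟨div_nonneg (by linarith) (by linarith), (div_le_one (by linarith)).2 (by linarith)⟩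

lemma one_sub_upProb_mul_add {σ : ℝ} (hσ : 0 < σ) (x : ℝ) :
    (1 - upProb σ x) * exp (-σ) + upProb σ x * exp σ = exp x := by
  have hD : exp σ - exp (-σ) ≠ 0 := sub_ne_zero.2 (exp_lt_exp.2 (by linarith)).ne'
  unfold upProb
  field_simp
  ring

noncomputable def binomialAvg {V : Type*} [AddCommMonoid V] [Module ℝ V] (σ : ℝ) (ω : ι → ℝ)
    (X : (ι → ℝ) → V) : V :=
  ∑ ε, coinWeight (fun i => upProb σ (ω i)) ε • X (binomialPath σ ε)

variable {σ : ℝ} {ω : ι → ℝ}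

omit [DecidableEq ι] in
lemma coinWeight_upProb_nonneg (hσ : 0 < σ) (hω : ∀ i, |ω i| ≤ σ) (ε : ι → Bool) :
    0 ≤ coinWeight (fun i => upProb σ (ω i)) ε :=
  coinWeight_nonneg (fun i => upProb_mem_Icc hσ (hω i)) ε

lemma binomialAvg_const (c : ℝ) : binomialAvg σ ω (fun _ => c) = c := by
  rw [binomialAvg, ← sum_smul, sum_coinWeight, one_smul]

lemma binomialAvg_add (X Y : (ι → ℝ) → ℝ) :
    binomialAvg σ ω (fun ω' => X ω' + Y ω') = binomialAvg σ ω X + binomialAvg σ ω Y := by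
  simp only [binomialAvg, smul_add, sum_add_distrib]

lemma binomialAvg_sub (X Y : (ι → ℝ) → ℝ) :
    binomialAvg σ ω (fun ω' => X ω' - Y ω') = binomialAvg σ ω X - binomialAvg σ ω Y := by
  simp only [binomialAvg, smul_sub, sum_sub_distrib]

lemma binomialAvg_sum {κ : Type*} (t : Finset κ) (X : κ → (ι → ℝ) → ℝ) :
    binomialAvg σ ω (fun ω' => ∑ k ∈ t, X k ω') = ∑ k ∈ t, binomialAvg σ ω (X k) := by
  simp only [binomialAvg, smul_sum]
  exact sum_comm

lemma binomialAvg_apply {κ : Type*} (X : (ι → ℝ) → κ → ℝ) (k : κ) :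
    binomialAvg σ ω X k = binomialAvg σ ω (fun ω' => X ω' k) := by
  simp only [binomialAvg, Finset.sum_apply, Pi.smul_apply]

lemma binomialAvg_mono (hσ : 0 < σ) (hω : ∀ i, |ω i| ≤ σ) {X Y : (ι → ℝ) → ℝ}
    (hXY : ∀ ε, X (binomialPath σ ε) ≤ Y (binomialPath σ ε)) :
    binomialAvg σ ω X ≤ binomialAvg σ ω Y :=
  sum_le_sum fun ε _ => smul_le_smul_of_nonneg_left (hXY ε) (coinWeight_upProb_nonneg hσ hω ε)

lemma ConvexOn.map_binomialAvg_le {V : Type*} [AddCommGroup V] [Module ℝ V] {s : Set V}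
    {φ : V → ℝ} (hφ : ConvexOn ℝ s φ) (hσ : 0 < σ) (hω : ∀ i, |ω i| ≤ σ) {X : (ι → ℝ) → V}
    (hX : ∀ ε, X (binomialPath σ ε) ∈ s) :
    φ (binomialAvg σ ω X) ≤ binomialAvg σ ω (fun ω' => φ (X ω')) :=
  hφ.map_sum_le (fun ε _ => coinWeight_upProb_nonneg hσ hω ε) (sum_coinWeight _)
    fun ε _ => hX ε

end BinomialAverage

section Model

variable {N : ℕ}

def DependsOnlyBefore {α : Type*} (k : ℕ) (Φ : (Fin N → ℝ) → α) : Prop :=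
  ∀ ω ω' : Fin N → ℝ, (∀ m : Fin N, (m : ℕ) < k → ω m = ω' m) → Φ ω = Φ ω'

lemma DependsOnlyBefore.mul {k : ℕ} {Φ Ψ : (Fin N → ℝ) → ℝ} (hΦ : DependsOnlyBefore k Φ)
    (hΨ : DependsOnlyBefore k Ψ) : DependsOnlyBefore k fun ω => Φ ω * Ψ ω :=
  fun ω ω' h => congrArg₂ (· * ·) (hΦ ω ω' h) (hΨ ω ω' h)

lemma DependsOnlyBefore.div {k : ℕ} {Φ Ψ : (Fin N → ℝ) → ℝ} (hΦ : DependsOnlyBefore k Φ)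
    (hΨ : DependsOnlyBefore k Ψ) : DependsOnlyBefore k fun ω => Φ ω / Ψ ω :=
  fun ω ω' h => congrArg₂ (· / ·) (hΦ ω ω' h) (hΨ ω ω' h)

lemma DependsOnlyBefore.update_binomialPath {α : Type*} {k : ℕ} {Φ : (Fin N → ℝ) → α}
    (hΦ : DependsOnlyBefore k Φ) (σ : ℝ) {m : Fin N} (hm : k ≤ m) (ε : Fin N → Bool)
    (b : Bool) : Φ (binomialPath σ (update ε m b)) = Φ (binomialPath σ ε) :=
  hΦ _ _ fun i hi => by
    rw [binomialPath, binomialPath, update_of_ne (Fin.ne_of_val_ne (by omega))]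

lemma DependsOnlyBefore.binomialAvg {k : ℕ} {X : (Fin N → ℝ) → ℝ} (hX : DependsOnlyBefore k X)
    (σ : ℝ) : DependsOnlyBefore k fun ω => binomialAvg σ ω X := by
  intro ω ω' h
  -- the coins at times `≥ k` have no influence on `X`, so their probabilities do not matter
  simp only [_root_.binomialAvg, smul_eq_mul]
  exact sum_coinWeight_mul_congr (univ.filter fun m : Fin N => k ≤ m)
    (fun m hm => by rw [h m (by simpa using hm)])
    fun m hm => hX.update_binomialPath σ (by simpa using hm)

lemma dependsOnlyBefore_stock14 (s0 : ℝ) (k : ℕ) :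
    DependsOnlyBefore k fun ω : Fin N → ℝ => stock14 N s0 ω k :=
  fun _ _ h => congrArg (fun t => s0 * exp t) (sum_congr rfl fun m hm => h m (mem_filter.1 hm).2)

lemma stock14_pos {s0 : ℝ} (hs0 : 0 < s0) (ω : Fin N → ℝ) (n : ℕ) : 0 < stock14 N s0 ω n :=
  mul_pos hs0 (exp_pos _)

lemma stock14_zero (s0 : ℝ) (ω : Fin N → ℝ) : stock14 N s0 ω 0 = s0 := by
  simp [stock14]

lemma stock14_succ (s0 : ℝ) (ω : Fin N → ℝ) {k : ℕ} (hk : k < N) :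
    stock14 N s0 ω (k + 1) = stock14 N s0 ω k * exp (ω ⟨k, hk⟩) := by
  have hset : univ.filter (fun m : Fin N => (m : ℕ) < k + 1)
      = insert ⟨k, hk⟩ (univ.filter fun m : Fin N => (m : ℕ) < k) := by
    ext m
    simp only [mem_filter, mem_univ, true_and, mem_insert, Fin.ext_iff]
    omega
  rw [stock14, stock14, hset, sum_insert (by simp), exp_add]
  ring

variable {σ : ℝ}

lemma binomialAvg_mul_exp (hσ : 0 < σ) {k : ℕ} (hk : k < N) {Φ : (Fin N → ℝ) → ℝ}
    (hΦ : DependsOnlyBefore k Φ) (ω : Fin N → ℝ) :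
    binomialAvg σ ω (fun ω' => Φ ω' * exp (ω' ⟨k, hk⟩))
      = exp (ω ⟨k, hk⟩) * binomialAvg σ ω Φ := by
  simp only [_root_.binomialAvg, smul_eq_mul]
  refine (sum_coinWeight_mul_apply _ ⟨k, hk⟩ (fun b => exp (if b then σ else -σ))
    (H := fun ε => Φ (binomialPath σ ε)) fun ε b => hΦ.update_binomialPath σ le_rfl ε b).trans ?_
  simp [one_sub_upProb_mul_add hσ]

lemma binomialAvg_mul_stock14_succ (hσ : 0 < σ) (s0 : ℝ) {k : ℕ} (hk : k < N)
    {Φ : (Fin N → ℝ) → ℝ} (hΦ : DependsOnlyBefore k Φ) (ω : Fin N → ℝ) :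
    binomialAvg σ ω (fun ω' => Φ ω' * stock14 N s0 ω' (k + 1))
      = exp (ω ⟨k, hk⟩) * binomialAvg σ ω (fun ω' => Φ ω' * stock14 N s0 ω' k) := by
  simp only [stock14_succ s0 _ hk, ← mul_assoc]
  exact binomialAvg_mul_exp hσ hk (hΦ.mul (dependsOnlyBefore_stock14 s0 k)) ω

lemma binomialAvg_stock14 (hσ : 0 < σ) (s0 : ℝ) (ω : Fin N → ℝ) {n : ℕ} (hn : n ≤ N) :
    binomialAvg σ ω (fun ω' => stock14 N s0 ω' n) = stock14 N s0 ω n := by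
  induction n with
  | zero => simp only [stock14_zero, binomialAvg_const]
  | succ n ih =>
    simp only [stock14_succ s0 _ hn]
    rw [binomialAvg_mul_exp hσ hn (dependsOnlyBefore_stock14 s0 n), ih (by omega)]
    ring

end Model

section Strategy

variable {N : ℕ} {s0 σ : ℝ} {γ : ℕ → (Fin N → ℝ) → ℝ}

noncomputable def averagedStrategy (s0 σ : ℝ) (γ : ℕ → (Fin N → ℝ) → ℝ) (k : ℕ)
    (ω : Fin N → ℝ) : ℝ :=
  binomialAvg σ ω (fun ω' => γ k ω' * stock14 N s0 ω' k) / stock14 N s0 ω k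

lemma adapted14_averagedStrategy (hγ : adapted14 N γ) :
    adapted14 N (averagedStrategy s0 σ γ) := fun k =>
  (DependsOnlyBefore.mul (hγ k) (dependsOnlyBefore_stock14 s0 k)).binomialAvg σ |>.div
    (dependsOnlyBefore_stock14 s0 k)

lemma averagedStrategy_mul_stock14 (hs0 : 0 < s0) (k : ℕ) (ω : Fin N → ℝ) :
    averagedStrategy s0 σ γ k ω * stock14 N s0 ω k
      = binomialAvg σ ω (fun ω' => γ k ω' * stock14 N s0 ω' k) :=
  div_mul_cancel₀ _ (stock14_pos hs0 ω k).ne'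

lemma averagedStrategy_mul_stock14_succ (hs0 : 0 < s0) (hσ : 0 < σ) (hγ : adapted14 N γ)
    {k : ℕ} (hk : k < N) (ω : Fin N → ℝ) :
    averagedStrategy s0 σ γ k ω * stock14 N s0 ω (k + 1)
      = binomialAvg σ ω (fun ω' => γ k ω' * stock14 N s0 ω' (k + 1)) := by
  rw [binomialAvg_mul_stock14_succ hσ s0 hk (hγ k), ← averagedStrategy_mul_stock14 hs0,
    stock14_succ s0 ω hk]
  ring

lemma averagedStrategy_gain (hs0 : 0 < s0) (hσ : 0 < σ) (hγ : adapted14 N γ) {k : ℕ}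
    (hk : k < N) (ω : Fin N → ℝ) :
    averagedStrategy s0 σ γ k ω * (stock14 N s0 ω (k + 1) - stock14 N s0 ω k)
      = binomialAvg σ ω
          (fun ω' => γ k ω' * (stock14 N s0 ω' (k + 1) - stock14 N s0 ω' k)) := by
  simp only [mul_sub, binomialAvg_sub, averagedStrategy_mul_stock14_succ hs0 hσ hγ hk,
    averagedStrategy_mul_stock14 hs0]

lemma averagedStrategy_trade (hs0 : 0 < s0) (hσ : 0 < σ) (hγ : adapted14 N γ) {k : ℕ}
    (hk : k < N) (ω : Fin N → ℝ) :
    (averagedStrategy s0 σ γ k ω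
        - (if k = 0 then 0 else averagedStrategy s0 σ γ (k - 1) ω)) * stock14 N s0 ω k
      = binomialAvg σ ω (fun ω' =>
          (γ k ω' - (if k = 0 then 0 else γ (k - 1) ω')) * stock14 N s0 ω' k) := by
  rcases k with _ | k
  · simp only [if_true, sub_zero, averagedStrategy_mul_stock14 hs0]
  · simp only [Nat.succ_ne_zero, if_false, Nat.add_sub_cancel, sub_mul, binomialAvg_sub,
      averagedStrategy_mul_stock14 hs0]
    rw [averagedStrategy_mul_stock14_succ hs0 hσ hγ (by omega)]

lemma binomialAvg_wealth14_le (hs0 : 0 < s0) (hσ : 0 < σ) {ω : Fin N → ℝ}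
    (hω : ∀ m, |ω m| ≤ σ) {g : ℕ → ℝ → ℝ} (hg : ∀ n, ConvexOn ℝ Set.univ (g n)) (y : ℝ)
    (hγ : adapted14 N γ) :
    binomialAvg σ ω (wealth14 N s0 g y γ) ≤ wealth14 N s0 g y (averagedStrategy s0 σ γ) ω := by
  unfold wealth14
  rw [binomialAvg_add, binomialAvg_const, binomialAvg_sum]
  gcongr with k hk
  have hk : k < N := mem_range.1 hk
  rw [binomialAvg_sub, averagedStrategy_gain hs0 hσ hγ hk, averagedStrategy_trade hs0 hσ hγ hk]
  exact sub_le_sub_left ((hg k).map_binomialAvg_le hσ hω fun _ => Set.mem_univ _) _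

theorem superReplicates_averagedStrategy (hs0 : 0 < s0) (hσ : 0 < σ) {g : ℕ → ℝ → ℝ}
    (hg : ∀ n, ConvexOn ℝ Set.univ (g n)) {F : (Fin (N + 1) → ℝ) → ℝ}
    (hF : ConvexOn ℝ {v : Fin (N + 1) → ℝ | ∀ i, 0 ≤ v i} F) {y : ℝ} (hγ : adapted14 N γ)
    (hsup : ∀ ε : Fin N → Bool, F (fun i : Fin (N + 1) => stock14 N s0 (binomialPath σ ε) i)
      ≤ wealth14 N s0 g y γ (binomialPath σ ε))
    {ω : Fin N → ℝ} (hω : ∀ m, |ω m| ≤ σ) :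
    F (fun i : Fin (N + 1) => stock14 N s0 ω i)
      ≤ wealth14 N s0 g y (averagedStrategy s0 σ γ) ω :=
  calc F (fun i : Fin (N + 1) => stock14 N s0 ω i)
      = F (binomialAvg σ ω fun ω' (i : Fin (N + 1)) => stock14 N s0 ω' i) := by
        congr 1; funext i
        rw [binomialAvg_apply, binomialAvg_stock14 hσ s0 ω (Nat.lt_succ_iff.1 i.isLt)]
    _ ≤ binomialAvg σ ω fun ω' => F fun i : Fin (N + 1) => stock14 N s0 ω' i :=
        hF.map_binomialAvg_le hσ hω fun _ i => (stock14_pos hs0 _ _).le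
    _ ≤ binomialAvg σ ω (wealth14 N s0 g y γ) := binomialAvg_mono hσ hω hsup
    _ ≤ wealth14 N s0 g y (averagedStrategy s0 σ γ) ω := binomialAvg_wealth14_le hs0 hσ hω hg y hγ

end Strategy

theorem stmt_14_general (N : ℕ) (s0 σlow σhigh : ℝ)
    (hs0 : 0 < s0) (hσ : σlow ≤ σhigh)
    (g : ℕ → ℝ → ℝ)
    (hg_conv : ∀ n, ConvexOn ℝ Set.univ (g n))
    (F : (Fin (N + 1) → ℝ) → ℝ)
    (hF_conv : ConvexOn ℝ {v : Fin (N + 1) → ℝ | ∀ i, 0 ≤ v i} F) :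
    price14 N s0 g F σlow σhigh = price14 N s0 g F σhigh σhigh := by
  rcases le_or_gt σhigh 0 with hle | hpos
  · have hbounds : ∀ x : ℝ, (σlow ≤ |x| ∧ |x| ≤ σhigh) ↔ (σhigh ≤ |x| ∧ |x| ≤ σhigh) :=
      fun x => by constructor <;> rintro ⟨-, h⟩ <;> exact ⟨by linarith [abs_nonneg x], h⟩
    simp only [price14, hbounds]
  · unfold price14
    congr 1
    ext y
    constructor
    · rintro ⟨γ, hγ, hsup⟩
      exact ⟨γ, hγ, fun ω hω => hsup ω fun m => ⟨hσ.trans (hω m).1, (hω m).2⟩⟩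
    · rintro ⟨γ, hγ, hsup⟩
      refine ⟨averagedStrategy s0 σhigh γ, adapted14_averagedStrategy hγ, fun ω hω =>
        superReplicates_averagedStrategy hs0 hpos hg_conv hF_conv hγ (fun ε => hsup _ fun m => ?_)
          fun m => (hω m).2⟩
      rw [abs_binomialPath hpos.le]
      exact ⟨le_rfl, le_rfl⟩

/-- Theorem 2.2 of the paper: for deterministic convex costs and a convex payoff, the
robust super-replication price in the uncertain volatility model equals the
super-replication price in the binomial model with volatility `σ_high`. -/
theorem stmt_14 (N : ℕ) (s0 σlow σhigh : ℝ)
    (hs0 : 0 < s0) (hσ0 : 0 ≤ σlow) (hσ : σlow ≤ σhigh)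
    (g : ℕ → ℝ → ℝ)
    (hg_conv : ∀ n, ConvexOn ℝ Set.univ (g n))
    (hg_nn : ∀ n β, 0 ≤ g n β) (hg0 : ∀ n, g n 0 = 0)
    (F : (Fin (N + 1) → ℝ) → ℝ)
    (hF_conv : ConvexOn ℝ {v : Fin (N + 1) → ℝ | ∀ i, 0 ≤ v i} F)
    (hF_nn : ∀ v, 0 ≤ F v) :
    price14 N s0 g F σlow σhigh = price14 N s0 g F σhigh σhigh :=
  stmt_14_general N s0 σlow σhigh hs0 hσ g hg_conv F hF_conv
end

section
/- Let (M_n)_{n=0,…,N} be a positive martingale on a filtered probability space such that M_0 is bounded by a constant K and the ratios satisfy |M_{n+1}/M_n - 1| ≤ C/√N almost surely for a constant C. Then for every positive integer p, E[(max_{n≤N} M_n)^p] ≤ K' for a constant K' depending only on p, C, K (not on N). -/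
open MeasureTheory Finset

/-!
Write `M (n + 1) = M n * (1 + R)` with `|R| ≤ ε = C / √N`. The martingale property kills the
linear term of the binomial expansion of `(1 + R) ^ q` in conditional mean, and the remainder is
`O(ε²) = O(1 / N)`, so `E[M (n + 1) ^ q] ≤ (1 + O(1 / N)) E[M n ^ q]` and
`E[M N ^ q] ≤ K ^ q e^{O(1)}`. For even `q` the tangent-line inequality makes `M ^ q`, stopped at `N`, a nonnegative submartingale,
so Doob's maximal inequality gives `t ^ q P(max_{n ≤ N} M n ≥ t) ≤ E[M N ^ q]`. With `q > p`,
summing these tails over the dyadic levels `t = 2 ^ j` bounds `E[(max_{n ≤ N} M n) ^ p]`.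
-/

lemma abs_one_add_pow_sub_le (q : ℕ) {R ε : ℝ} (hR : |R| ≤ ε) :
    |(1 + R) ^ q - 1 - q * R| ≤ q ^ 2 * (1 + ε) ^ q * ε ^ 2 := by
  have h1R : |1 + R| ≤ 1 + ε := (abs_add_le 1 R).trans (by rw [abs_one]; linarith)
  have hR2 : |R| ^ 2 ≤ ε ^ 2 := pow_le_pow_left₀ (abs_nonneg R) hR 2
  induction q with
  | zero => simp
  | succ q ih =>
    have hexpand : (1 + R) ^ (q + 1) - 1 - (q + 1 : ℕ) * R
        = (1 + R) * ((1 + R) ^ q - 1 - q * R) + q * R ^ 2 := by push_cast; ring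
    have hε : 0 ≤ ε := (abs_nonneg R).trans hR
    have hgrow : (q : ℝ) * ε ^ 2 ≤ (2 * q + 1) * ε ^ 2 * ((1 + ε) ^ q * (1 + ε)) := by
      have hP : 1 ≤ (1 + ε) ^ q * (1 + ε) := by rw [← pow_succ]; exact one_le_pow₀ (by linarith)
      nlinarith [mul_le_mul_of_nonneg_left hP (by positivity : (0 : ℝ) ≤ (2 * q + 1) * ε ^ 2)]
    calc |(1 + R) ^ (q + 1) - 1 - (q + 1 : ℕ) * R|
        = |(1 + R) * ((1 + R) ^ q - 1 - q * R) + q * R ^ 2| := by rw [hexpand]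
      _ ≤ |1 + R| * |(1 + R) ^ q - 1 - q * R| + q * |R| ^ 2 := by
          grw [abs_add_le, abs_mul, abs_mul, abs_pow, Nat.abs_cast]
      _ ≤ (1 + ε) * (q ^ 2 * (1 + ε) ^ q * ε ^ 2) + q * ε ^ 2 := by gcongr
      _ ≤ ((q + 1 : ℕ) : ℝ) ^ 2 * (1 + ε) ^ (q + 1) * ε ^ 2 := by
          rw [pow_succ (1 + ε)]
          push_cast
          linarith

lemma pow_add_mul_sub_le_pow (q : ℕ) {a b : ℝ} (ha : 0 < a) (hb : 0 ≤ b) :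
    a ^ (q + 1) + (q + 1) * (a ^ q * (b - a)) ≤ b ^ (q + 1) := by
  have hR : -2 ≤ b / a - 1 := by linarith [div_nonneg hb ha.le]
  calc a ^ (q + 1) + (q + 1) * (a ^ q * (b - a))
      = a ^ (q + 1) * (1 + (q + 1 : ℕ) * (b / a - 1)) := by field_simp; push_cast; ring
    _ ≤ a ^ (q + 1) * (1 + (b / a - 1)) ^ (q + 1) := by gcongr; exact one_add_mul_le_pow hR _
    _ = b ^ (q + 1) := by rw [← mul_pow]; field_simp; ring

lemma pow_le_pow_add_mul_sub_add (q : ℕ) {a b ε : ℝ} (ha : 0 < a) (hab : |b / a - 1| ≤ ε) :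
    b ^ (q + 1) ≤ a ^ (q + 1) + (q + 1) * (a ^ q * (b - a))
      + (q + 1) ^ 2 * (1 + ε) ^ (q + 1) * ε ^ 2 * a ^ (q + 1) := by
  have h := (abs_le.1 (abs_one_add_pow_sub_le (q + 1) hab)).2
  push_cast at h
  calc b ^ (q + 1) = a ^ (q + 1) * (1 + (b / a - 1)) ^ (q + 1) := by
        rw [← mul_pow]; field_simp; ring
    _ = a ^ (q + 1) + (q + 1) * (a ^ q * (b - a)) + a ^ (q + 1) *
        ((1 + (b / a - 1)) ^ (q + 1) - 1 - (q + 1) * (b / a - 1)) := by field_simp; ring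
    _ ≤ _ := by
        rw [mul_comm _ (a ^ (q + 1))]
        gcongr

lemma pow_le_one_add_sum_indicator (p : ℕ) {x : ℝ} (hx : 0 ≤ x) {J : ℕ} (hxJ : x < 2 ^ J) :
    x ^ p ≤ 1 + ∑ j ∈ range J,
      (Set.Ici ((2 : ℝ) ^ j)).indicator (fun _ ↦ (2 : ℝ) ^ ((j + 1) * p)) x := by
  induction J with
  | zero => simpa using pow_le_one₀ hx (by simpa using hxJ.le)
  | succ J ih =>
    have hnonneg : ∀ j, 0 ≤ (Set.Ici ((2 : ℝ) ^ j)).indicator (fun _ ↦ (2 : ℝ) ^ ((j + 1) * p)) x :=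
      fun j ↦ Set.indicator_nonneg (fun _ _ ↦ by positivity) x
    rw [sum_range_succ]
    rcases lt_or_ge x (2 ^ J) with hlow | hhigh
    · linarith [ih hlow, hnonneg J]
    · rw [Set.indicator_of_mem (Set.mem_Ici.2 hhigh), pow_mul]
      linarith [pow_le_pow_left₀ hx hxJ.le p, sum_nonneg fun j (_ : j ∈ range J) ↦ hnonneg j]

namespace MeasureTheory

variable {Ω : Type*} {m0 : MeasurableSpace Ω} {μ : Measure Ω} {𝒢 : Filtration ℕ m0}
  {M : ℕ → Ω → ℝ}

lemma integral_pow_le_of_mul_measureReal_le [IsProbabilityMeasure μ] {X : Ω → ℝ}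
    (hX : Measurable X) (hX0 : ∀ᵐ ω ∂μ, 0 ≤ X ω) {B : ℝ} (hXB : ∀ᵐ ω ∂μ, X ω ≤ B)
    {p q : ℕ} (hpq : p < q) {I : ℝ}
    (htail : ∀ t : ℝ, 0 ≤ t → t ^ q * μ.real {ω | t ≤ X ω} ≤ I) :
    ∫ ω, X ω ^ p ∂μ ≤ 1 + 2 ^ (p + 1) * I := by
  obtain ⟨J, hJ⟩ := pow_unbounded_of_one_lt B one_lt_two
  have hI : 0 ≤ I := by simpa [zero_pow (by omega : q ≠ 0)] using htail 0 le_rfl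
  have hlevel : ∀ j : ℕ, MeasurableSet (X ⁻¹' Set.Ici ((2 : ℝ) ^ j)) :=
    fun j ↦ hX measurableSet_Ici
  have hterm : ∀ j : ℕ, μ.real (X ⁻¹' Set.Ici ((2 : ℝ) ^ j)) * 2 ^ ((j + 1) * p)
      ≤ 2 ^ p * I * (1 / 2) ^ j := by
    intro j
    have h := htail (2 ^ j) (by positivity)
    have hexp : (2 : ℝ) ^ ((j + 1) * p) * 2 ^ j ≤ 2 ^ p * (2 ^ j) ^ q := by
      rw [← pow_mul, ← pow_add, ← pow_add]
      exact pow_le_pow_right₀ one_le_two (by nlinarith)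
    rw [div_pow, one_pow, ← div_eq_mul_one_div, le_div_iff₀ (by positivity)]
    calc μ.real (X ⁻¹' Set.Ici ((2 : ℝ) ^ j)) * 2 ^ ((j + 1) * p) * 2 ^ j
        = μ.real {ω | 2 ^ j ≤ X ω} * (2 ^ ((j + 1) * p) * 2 ^ j) := by rw [mul_assoc]; rfl
      _ ≤ μ.real {ω | 2 ^ j ≤ X ω} * (2 ^ p * (2 ^ j) ^ q) := by gcongr
      _ = 2 ^ p * ((2 ^ j) ^ q * μ.real {ω | 2 ^ j ≤ X ω}) := by ring
      _ ≤ 2 ^ p * I := by gcongr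
  have hind : ∀ j : ℕ, Integrable (fun ω ↦
      (Set.Ici ((2 : ℝ) ^ j)).indicator (fun _ ↦ (2 : ℝ) ^ ((j + 1) * p)) (X ω)) μ :=
    fun j ↦ (integrable_const _).indicator (hlevel j)
  have hsum_int := integrable_finsetSum (range J) fun j _ ↦ hind j
  calc ∫ ω, X ω ^ p ∂μ
      ≤ ∫ ω, 1 + ∑ j ∈ range J,
          (Set.Ici ((2 : ℝ) ^ j)).indicator (fun _ ↦ (2 : ℝ) ^ ((j + 1) * p)) (X ω) ∂μ := by
        refine integral_mono_of_nonneg ?_ ((integrable_const 1).add hsum_int) ?_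
        · filter_upwards [hX0] with ω h using pow_nonneg h p
        · filter_upwards [hX0, hXB] with ω h0 hB
          exact pow_le_one_add_sum_indicator p h0 (hB.trans_lt hJ)
    _ = 1 + ∑ j ∈ range J, μ.real (X ⁻¹' Set.Ici ((2 : ℝ) ^ j)) * 2 ^ ((j + 1) * p) := by
        rw [integral_add (integrable_const 1) hsum_int, integral_finsetSum _ fun j _ ↦ hind j,
          integral_const, probReal_univ, one_smul]
        congr 1
        exact sum_congr rfl fun j _ ↦ integral_indicator_const _ (hlevel j)
    _ ≤ 1 + ∑ j ∈ range J, 2 ^ p * I * (1 / 2) ^ j := by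
        gcongr 1 + ?_
        exact sum_le_sum fun j _ ↦ hterm j
    _ ≤ 1 + 2 ^ (p + 1) * I := by
        rw [← mul_sum, pow_succ]
        nlinarith [sum_geometric_two_le J, (by positivity : (0 : ℝ) ≤ 2 ^ p * I)]

lemma Submartingale.mul_measureReal_le_integral [IsFiniteMeasure μ] {f : ℕ → Ω → ℝ}
    (hsub : Submartingale f 𝒢 μ) (hnonneg : 0 ≤ f) {t : ℝ} (ht : 0 ≤ t) (n : ℕ) :
    t * μ.real {ω | t ≤ (range (n + 1)).sup' nonempty_range_add_one fun k ↦ f k ω}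
      ≤ ∫ ω, f n ω ∂μ := by
  have h := (maximal_ineq hsub hnonneg (ε := ⟨t, ht⟩) n).trans <| ENNReal.ofReal_le_ofReal <|
    setIntegral_le_integral (hsub.integrable n) (.of_forall fun ω ↦ hnonneg n ω)
  have h' := ENNReal.toReal_mono ENNReal.ofReal_ne_top h
  rwa [ENNReal.toReal_mul, ENNReal.toReal_ofReal (integral_nonneg (hnonneg n))] at h'


lemma ae_le_mul_pow_of_abs_div_sub_one_le {N : ℕ} {K ε : ℝ} (h0 : ∀ᵐ ω ∂μ, M 0 ω ≤ K)
    (hpos : ∀ n, ∀ᵐ ω ∂μ, 0 < M n ω)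
    (hratio : ∀ n < N, ∀ᵐ ω ∂μ, |M (n + 1) ω / M n ω - 1| ≤ ε) :
    ∀ n ≤ N, ∀ᵐ ω ∂μ, M n ω ≤ K * (1 + ε) ^ n := by
  intro n hn
  induction n with
  | zero => simpa using h0
  | succ n ih =>
    filter_upwards [ih (by omega), hpos n, hratio n (by omega)] with ω hle hM hr
    have hstep : M (n + 1) ω ≤ (1 + ε) * M n ω := by
      rw [← div_le_iff₀ hM]; linarith [(abs_le.1 hr).2]
    calc M (n + 1) ω ≤ (1 + ε) * M n ω := hstep
      _ ≤ (1 + ε) * (K * (1 + ε) ^ n) := by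
          gcongr; linarith [abs_nonneg (M (n + 1) ω / M n ω - 1)]
      _ = K * (1 + ε) ^ (n + 1) := by ring

lemma Martingale.integrable_pow_mul_sub (hM : Martingale M 𝒢 μ) {n : ℕ} {B : ℝ}
    (hpos : ∀ᵐ ω ∂μ, 0 < M n ω) (hB : ∀ᵐ ω ∂μ, M n ω ≤ B) (r : ℕ) :
    Integrable (M n ^ r * (M (n + 1) - M n)) μ := by
  refine ((hM.integrable (n + 1)).sub (hM.integrable n)).bdd_mul (c := B ^ r)
    (((hM.stronglyAdapted n).mono (𝒢.le n)).pow r).aestronglyMeasurable ?_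
  filter_upwards [hpos, hB] with ω h0 hle
  rw [Pi.pow_apply, norm_pow, Real.norm_of_nonneg h0.le]
  exact pow_le_pow_left₀ h0.le hle r

lemma Martingale.condExp_mul_sub_ae_eq_zero (hM : Martingale M 𝒢 μ) {n : ℕ} {g : Ω → ℝ}
    (hg : StronglyMeasurable[𝒢 n] g) (hgi : Integrable (g * (M (n + 1) - M n)) μ) :
    μ[g * (M (n + 1) - M n)|𝒢 n] =ᵐ[μ] 0 := by
  have hinc : μ[M (n + 1) - M n|𝒢 n] =ᵐ[μ] 0 := by
    filter_upwards [condExp_sub (hM.integrable (n + 1)) (hM.integrable n) (𝒢 n),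
      hM.condExp_ae_eq n.le_succ, hM.condExp_ae_eq (le_refl n)] with ω h1 h2 h3
    simp [h1, h2, h3]
  filter_upwards [condExp_mul_of_stronglyMeasurable_left hg hgi
    ((hM.integrable _).sub (hM.integrable _)), hinc] with ω h1 h2
  simp [h1, h2]

section Finite

variable [IsFiniteMeasure μ]

lemma Martingale.integrable_pow (hM : Martingale M 𝒢 μ) {n : ℕ} {B : ℝ}
    (hpos : ∀ᵐ ω ∂μ, 0 < M n ω) (hB : ∀ᵐ ω ∂μ, M n ω ≤ B) (r : ℕ) :
    Integrable (M n ^ r) μ := by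
  refine .of_bound (((hM.stronglyAdapted n).mono (𝒢.le n)).pow r).aestronglyMeasurable (B ^ r) ?_
  filter_upwards [hpos, hB] with ω h0 hle
  rw [Pi.pow_apply, norm_pow, Real.norm_of_nonneg h0.le]
  exact pow_le_pow_left₀ h0.le hle r

lemma Martingale.pow_le_condExp_pow (hM : Martingale M 𝒢 μ) (r : ℕ) {n : ℕ} {B : ℝ}
    (ha : ∀ᵐ ω ∂μ, 0 < M n ω) (hb : ∀ᵐ ω ∂μ, 0 < M (n + 1) ω)
    (haB : ∀ᵐ ω ∂μ, M n ω ≤ B) (hbB : ∀ᵐ ω ∂μ, M (n + 1) ω ≤ B) :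
    M n ^ (r + 1) ≤ᵐ[μ] μ[M (n + 1) ^ (r + 1)|𝒢 n] := by
  have hprod := hM.integrable_pow_mul_sub ha haB r
  have hapow := hM.integrable_pow ha haB (r + 1)
  have htangent : M n ^ (r + 1) + (r + 1 : ℝ) • (M n ^ r * (M (n + 1) - M n))
      ≤ᵐ[μ] M (n + 1) ^ (r + 1) := by
    filter_upwards [ha, hb] with ω h0 h1
    exact pow_add_mul_sub_le_pow r h0 h1.le
  filter_upwards [condExp_mono (m := 𝒢 n) (hapow.add (hprod.smul _))
      (hM.integrable_pow hb hbB (r + 1)) htangent,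
    condExp_add hapow (hprod.smul (r + 1 : ℝ)) (𝒢 n),
    condExp_smul (r + 1 : ℝ) (M n ^ r * (M (n + 1) - M n)) (𝒢 n),
    hM.condExp_mul_sub_ae_eq_zero ((hM.stronglyAdapted n).pow r) hprod]
    with ω hmono hadd hsmul hzero
  rw [hadd, Pi.add_apply, hsmul, Pi.smul_apply, hzero,
    condExp_of_stronglyMeasurable (𝒢.le n) ((hM.stronglyAdapted n).pow _) hapow] at hmono
  simpa using hmono

lemma Martingale.integral_pow_succ_le (hM : Martingale M 𝒢 μ) (r : ℕ) {n : ℕ} {B ε : ℝ}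
    (ha : ∀ᵐ ω ∂μ, 0 < M n ω) (hb : ∀ᵐ ω ∂μ, 0 < M (n + 1) ω)
    (haB : ∀ᵐ ω ∂μ, M n ω ≤ B) (hbB : ∀ᵐ ω ∂μ, M (n + 1) ω ≤ B)
    (hratio : ∀ᵐ ω ∂μ, |M (n + 1) ω / M n ω - 1| ≤ ε) :
    ∫ ω, M (n + 1) ω ^ (r + 1) ∂μ
      ≤ (1 + (r + 1) ^ 2 * (1 + ε) ^ (r + 1) * ε ^ 2) * ∫ ω, M n ω ^ (r + 1) ∂μ := by
  set δ : ℝ := (r + 1) ^ 2 * (1 + ε) ^ (r + 1) * ε ^ 2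
  have hprod := hM.integrable_pow_mul_sub ha haB r
  have hapow := hM.integrable_pow ha haB (r + 1)
  have hmean : ∫ ω, (M n ^ r * (M (n + 1) - M n)) ω ∂μ = 0 := by
    rw [← integral_condExp (𝒢.le n), integral_congr_ae
      (hM.condExp_mul_sub_ae_eq_zero ((hM.stronglyAdapted n).pow r) hprod)]
    simp
  calc ∫ ω, M (n + 1) ω ^ (r + 1) ∂μ
      ≤ ∫ ω, (M n ω ^ (r + 1) + (r + 1) * (M n ^ r * (M (n + 1) - M n)) ω
          + δ * M n ω ^ (r + 1)) ∂μ := by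
        refine integral_mono_ae (hM.integrable_pow hb hbB (r + 1))
          ((hapow.add (hprod.const_mul _)).add (hapow.const_mul _)) ?_
        filter_upwards [ha, hratio] with ω h0 h1
        exact pow_le_pow_add_mul_sub_add r h0 h1
    _ = (1 + δ) * ∫ ω, M n ω ^ (r + 1) ∂μ := by
        rw [integral_add (f := fun ω ↦ M n ω ^ (r + 1) + (r + 1) * (M n ^ r * (M (n + 1) - M n)) ω)
            (g := fun ω ↦ δ * M n ω ^ (r + 1)) (hapow.add (hprod.const_mul _)) (hapow.const_mul _),
          integral_add (f := fun ω ↦ M n ω ^ (r + 1))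
            (g := fun ω ↦ (r + 1) * (M n ^ r * (M (n + 1) - M n)) ω) hapow (hprod.const_mul _),
          integral_const_mul, integral_const_mul, hmean]
        ring

lemma Martingale.submartingale_pow_min (hM : Martingale M 𝒢 μ) (r N : ℕ) {B : ℝ}
    (hpos : ∀ n, ∀ᵐ ω ∂μ, 0 < M n ω) (hB : ∀ n ≤ N, ∀ᵐ ω ∂μ, M n ω ≤ B) :
    Submartingale (fun n ↦ M (min n N) ^ (r + 1)) 𝒢 μ := by
  refine submartingale_nat
    (fun n ↦ ((hM.stronglyAdapted _).mono (𝒢.mono (min_le_left n N))).pow _)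
    (fun n ↦ hM.integrable_pow (hpos _) (hB _ (min_le_right n N)) _) fun n ↦ ?_
  rcases lt_or_ge n N with hn | hn
  · simp only [min_eq_left hn.le, min_eq_left (Nat.succ_le_of_lt hn)]
    exact hM.pow_le_condExp_pow r (hpos n) (hpos (n + 1)) (hB n hn.le) (hB (n + 1) hn)
  · simp only [min_eq_right hn, min_eq_right (hn.trans n.le_succ)]
    rw [condExp_of_stronglyMeasurable (𝒢.le n) (((hM.stronglyAdapted N).mono (𝒢.mono hn)).pow _)
      (hM.integrable_pow (hpos N) (hB N le_rfl) _)]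

end Finite

variable [IsProbabilityMeasure μ]

lemma Martingale.integral_pow_le (hM : Martingale M 𝒢 μ) (r : ℕ) {N : ℕ} {K B ε : ℝ}
    (hε : 0 ≤ ε) (hpos : ∀ n, ∀ᵐ ω ∂μ, 0 < M n ω) (hB : ∀ n ≤ N, ∀ᵐ ω ∂μ, M n ω ≤ B)
    (h0 : ∀ᵐ ω ∂μ, M 0 ω ≤ K) (hratio : ∀ n < N, ∀ᵐ ω ∂μ, |M (n + 1) ω / M n ω - 1| ≤ ε) :
    ∀ n ≤ N, ∫ ω, M n ω ^ (r + 1) ∂μ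
      ≤ K ^ (r + 1) * (1 + (r + 1) ^ 2 * (1 + ε) ^ (r + 1) * ε ^ 2) ^ n := by
  intro n hn
  induction n with
  | zero =>
    have hle : ∀ᵐ ω ∂μ, M 0 ω ^ (r + 1) ≤ K ^ (r + 1) := by
      filter_upwards [hpos 0, h0] with ω h1 h2 using pow_le_pow_left₀ h1.le h2 _
    simpa using integral_mono_ae (hM.integrable_pow (hpos 0) (hB 0 hn) _) (integrable_const _) hle
  | succ n ih =>
    calc ∫ ω, M (n + 1) ω ^ (r + 1) ∂μ
        ≤ (1 + (r + 1) ^ 2 * (1 + ε) ^ (r + 1) * ε ^ 2) * ∫ ω, M n ω ^ (r + 1) ∂μ :=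
          hM.integral_pow_succ_le r (hpos n) (hpos (n + 1)) (hB n (by omega)) (hB (n + 1) hn)
            (hratio n (by omega))
      _ ≤ (1 + (r + 1) ^ 2 * (1 + ε) ^ (r + 1) * ε ^ 2)
          * (K ^ (r + 1) * (1 + (r + 1) ^ 2 * (1 + ε) ^ (r + 1) * ε ^ 2) ^ n) := by
          gcongr; exact ih (by omega)
      _ = _ := by ring

lemma Martingale.integral_sup_pow_le (hM : Martingale M 𝒢 μ) {p r : ℕ} (hpr : p ≤ r)
    (hr : Even (r + 1)) (N : ℕ) {K ε : ℝ} (hK : 0 ≤ K) (hε : 0 ≤ ε)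
    (hpos : ∀ n, ∀ᵐ ω ∂μ, 0 < M n ω) (h0 : ∀ᵐ ω ∂μ, M 0 ω ≤ K)
    (hratio : ∀ n < N, ∀ᵐ ω ∂μ, |M (n + 1) ω / M n ω - 1| ≤ ε) :
    ∫ ω, ((range (N + 1)).sup' nonempty_range_add_one fun n ↦ M n ω) ^ p ∂μ
      ≤ 1 + 2 ^ (p + 1) * (K ^ (r + 1) * (1 + (r + 1) ^ 2 * (1 + ε) ^ (r + 1) * ε ^ 2) ^ N) := by
  have hB : ∀ n ≤ N, ∀ᵐ ω ∂μ, M n ω ≤ K * (1 + ε) ^ N := fun n hn ↦ by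
    filter_upwards [ae_le_mul_pow_of_abs_div_sub_one_le h0 hpos hratio n hn] with ω h
    exact h.trans (by gcongr; linarith)
  have hsub := hM.submartingale_pow_min r N hpos hB
  have hnonneg : 0 ≤ fun n ω ↦ M (min n N) ω ^ (r + 1) := fun n ω ↦ hr.pow_nonneg _
  refine integral_pow_le_of_mul_measureReal_le (B := K * (1 + ε) ^ N)
    (Finset.measurable_range_sup'' fun n _ ↦ ((hM.stronglyAdapted n).mono (𝒢.le n)).measurable)
    ?_ ?_ (Nat.lt_succ_of_le hpr) fun t ht ↦ ?_
  · filter_upwards [hpos 0] with ω h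
    exact h.le.trans (le_sup' (fun n ↦ M n ω) (mem_range.2 N.succ_pos))
  · filter_upwards [(Filter.eventually_all_finset (range (N + 1))).2 fun n hn ↦
      hB n (Nat.lt_succ_iff.1 (mem_range.1 hn))] with ω h
    exact sup'_le _ _ h
  calc t ^ (r + 1) * μ.real {ω | t ≤ (range (N + 1)).sup' nonempty_range_add_one fun n ↦ M n ω}
      ≤ t ^ (r + 1) * μ.real {ω | t ^ (r + 1) ≤ (range (N + 1)).sup' nonempty_range_add_one
          fun n ↦ M (min n N) ω ^ (r + 1)} := by
        refine mul_le_mul_of_nonneg_left (measureReal_mono fun ω hω ↦ ?_) (by positivity)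
        obtain ⟨n, hn, htn⟩ := (le_sup'_iff (f := fun n ↦ M n ω) nonempty_range_add_one).1 hω
        have hnN : min n N = n := min_eq_left (Nat.lt_succ_iff.1 (mem_range.1 hn))
        exact le_sup'_of_le (fun n ↦ M (min n N) ω ^ (r + 1)) hn
          (by simpa [hnN] using pow_le_pow_left₀ ht htn (r + 1))
    _ ≤ ∫ ω, M (min N N) ω ^ (r + 1) ∂μ :=
        hsub.mul_measureReal_le_integral hnonneg (by positivity) N
    _ ≤ _ := by
        rw [min_self]
        exact hM.integral_pow_le r hε hpos hB h0 hratio N le_rfl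

end MeasureTheory

theorem stmt_16_general (p : ℕ) (C K : ℝ) (hC : 0 ≤ C) (hK : 0 ≤ K) :
    ∃ K' : ℝ, ∀ (Ω : Type) (m0 : MeasurableSpace Ω) (μ : Measure Ω)
      (_ : IsProbabilityMeasure μ) (𝒢 : Filtration ℕ m0) (N : ℕ) (_ : 0 < N)
      (M : ℕ → Ω → ℝ),
      Martingale M 𝒢 μ →
      (∀ n, ∀ᵐ ω ∂μ, 0 < M n ω) →
      (∀ᵐ ω ∂μ, M 0 ω ≤ K) →
      (∀ n, n < N → ∀ᵐ ω ∂μ, |M (n + 1) ω / M n ω - 1| ≤ C / Real.sqrt N) →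
      ∫ ω, ((Finset.range (N + 1)).sup' Finset.nonempty_range_add_one
          (fun n => M n ω)) ^ p ∂μ ≤ K' := by
  set r := 2 * p + 1
  set D : ℝ := (r + 1) ^ 2 * (1 + C) ^ (r + 1) * C ^ 2 with hD
  refine ⟨1 + 2 ^ (p + 1) * (K ^ (r + 1) * Real.exp D), ?_⟩
  intro Ω m0 μ _ 𝒢 N hN M hM hpos h0 hratio
  set ε := C / Real.sqrt N
  have hε : 0 ≤ ε := by positivity
  have hεC : ε ≤ C := div_le_self hC (Real.one_le_sqrt.2 (by exact_mod_cast hN))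
  have hNε : (N : ℝ) * ε ^ 2 = C ^ 2 := by
    rw [div_pow, Real.sq_sqrt (Nat.cast_nonneg N)]
    field_simp
  have hgrowth : (1 + (r + 1) ^ 2 * (1 + ε) ^ (r + 1) * ε ^ 2) ^ N ≤ Real.exp D := by
    calc (1 + (r + 1) ^ 2 * (1 + ε) ^ (r + 1) * ε ^ 2) ^ N
        ≤ Real.exp ((r + 1) ^ 2 * (1 + ε) ^ (r + 1) * ε ^ 2) ^ N := by
          gcongr
          linarith [Real.add_one_le_exp ((r + 1) ^ 2 * (1 + ε) ^ (r + 1) * ε ^ 2)]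
      _ = Real.exp ((r + 1) ^ 2 * (1 + ε) ^ (r + 1) * (N * ε ^ 2)) := by
          rw [← Real.exp_nat_mul]; ring_nf
      _ ≤ Real.exp D := by rw [hNε, hD]; gcongr
  calc _ ≤ 1 + 2 ^ (p + 1) * (K ^ (r + 1) * (1 + (r + 1) ^ 2 * (1 + ε) ^ (r + 1) * ε ^ 2) ^ N) :=
        hM.integral_sup_pow_le (by omega) ⟨p + 1, by omega⟩ N hK hε hpos h0 hratio
    _ ≤ 1 + 2 ^ (p + 1) * (K ^ (r + 1) * Real.exp D) := by gcongr

/-- Uniform `L^p` moment bound for positive discrete martingales with multiplicative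
increments of order `1/√N` (step (i) of Lemma 3.7, Kusuoka's estimate): the bound
depends only on `p`, `C` and `K`, not on `N`. -/
theorem stmt_16 (p : ℕ) (hp : 0 < p) (C K : ℝ) (hC : 0 ≤ C) (hK : 0 ≤ K) :
    ∃ K' : ℝ, ∀ (Ω : Type) (m0 : MeasurableSpace Ω) (μ : Measure Ω)
      (_ : IsProbabilityMeasure μ) (𝒢 : Filtration ℕ m0) (N : ℕ) (_ : 0 < N)
      (M : ℕ → Ω → ℝ),
      Martingale M 𝒢 μ →
      (∀ n, ∀ᵐ ω ∂μ, 0 < M n ω) →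
      (∀ᵐ ω ∂μ, M 0 ω ≤ K) →
      (∀ n, n < N → ∀ᵐ ω ∂μ, |M (n + 1) ω / M n ω - 1| ≤ C / Real.sqrt N) →
      ∫ ω, ((Finset.range (N + 1)).sup' Finset.nonempty_range_add_one
          (fun n => M n ω)) ^ p ∂μ ≤ K' :=
  stmt_16_general p C K hC hK
end

section
/- Let σ_low > 0 and let b : ℝ → ℝ be defined by b(u) = -u for u ≤ -σ_low², b(u) = (σ_low² - u)²/(4σ_low²) for -σ_low² < u < 0, and for u ≥ 0, b(u) = a(√u)² where a(σ) = max((σ_low² - σ²)/(2σ_low), 0, (σ² - σ_high²)/(2σ_high)) with 0 < σ_low ≤ σ_high. Then b is convex on ℝ and b(u) = 0 exactly for u ∈ [σ_low², σ_high²]. -/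
/-!
With `L = σ_low²` and `H = σ_high²`, the function `b` is given on all of `ℝ` by the closed form
`-u + ((u + L)₊² - (u - L)₊²) / (4L) + (u - H)₊² / (4H)`.
Since `t ↦ t₊²` is `C¹` with derivative `2 t₊`, this is differentiable with derivative
`-1 + ((u + L)₊ - (u - L)₊) / (2L) + (u - H)₊ / (2H)`, which is monotone because
`(u + L)₊ - (u - L)₊` is `u + L` clamped to `[0, 2L]`. Hence `b` is convex. On each of the
regions `u ≤ -L`, `-L ≤ u ≤ L`, `L ≤ u ≤ H`, `H ≤ u` the closed form is `-u`, `(L - u)² / (4L)`,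
`0`, `(u - H)² / (4H)` respectively, which gives the zero set.
-/

open Set

lemma hasDerivAt_max_zero_sq (x : ℝ) :
    HasDerivAt (fun t : ℝ => max t 0 ^ 2) (2 * max x 0) x := by
  rcases lt_trichotomy x 0 with hx | rfl | hx
  · have hzero : (fun t : ℝ => max t 0 ^ 2) =ᶠ[nhds x] fun _ => 0 := by
      filter_upwards [Iio_mem_nhds hx] with t ht
      simp [max_eq_right (le_of_lt (mem_Iio.mp ht))]
    simpa [max_eq_right hx.le] using (hasDerivAt_const x (0 : ℝ)).congr_of_eventuallyEq hzero
  · have hleft : HasDerivWithinAt (fun t : ℝ => max t 0 ^ 2) 0 (Iic 0) 0 :=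
      (hasDerivWithinAt_const 0 _ 0).congr (fun t ht => by simp [mem_Iic.mp ht]) (by simp)
    have hright : HasDerivWithinAt (fun t : ℝ => max t 0 ^ 2) 0 (Ici 0) 0 :=
      (((hasDerivAt_pow 2 0).hasDerivWithinAt).congr (fun t ht => by simp [mem_Ici.mp ht])
        (by simp)).congr_deriv (by simp)
    simpa [Iic_union_Ici, hasDerivWithinAt_univ] using hleft.union hright
  · have hsq : (fun t : ℝ => max t 0 ^ 2) =ᶠ[nhds x] fun t => t ^ 2 := by
      filter_upwards [Ioi_mem_nhds hx] with t ht
      rw [max_eq_left (le_of_lt (mem_Ioi.mp ht))]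
    simpa [max_eq_left hx.le] using (hasDerivAt_pow 2 x).congr_of_eventuallyEq hsq

lemma monotone_max_add_zero_sub_max_sub_zero {c : ℝ} (hc : 0 ≤ c) :
    Monotone fun x : ℝ => max (x + c) 0 - max (x - c) 0 := by
  intro x y hxy
  simp only
  rcases max_cases (x + c) 0 with ⟨e1, _⟩ | ⟨e1, _⟩ <;>
  rcases max_cases (x - c) 0 with ⟨e2, _⟩ | ⟨e2, _⟩ <;>
  rcases max_cases (y + c) 0 with ⟨e3, _⟩ | ⟨e3, _⟩ <;>
  rcases max_cases (y - c) 0 with ⟨e4, _⟩ | ⟨e4, _⟩ <;>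
  rw [e1, e2, e3, e4] <;> linarith

noncomputable def bClosedForm (L H u : ℝ) : ℝ :=
  -u + (max (u + L) 0 ^ 2 - max (u - L) 0 ^ 2) / (4 * L) + max (u - H) 0 ^ 2 / (4 * H)

lemma hasDerivAt_bClosedForm (L H x : ℝ) :
    HasDerivAt (bClosedForm L H)
      (-1 + (max (x + L) 0 - max (x - L) 0) / (2 * L) + max (x - H) 0 / (2 * H)) x := by
  have hplus := (hasDerivAt_max_zero_sq (x + L)).comp_add_const x L
  have hminus := (hasDerivAt_max_zero_sq (x - L)).comp_sub_const x L
  have hhigh := (hasDerivAt_max_zero_sq (x - H)).comp_sub_const x H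
  refine ((((hasDerivAt_id' x).neg.add ((hplus.sub hminus).div_const (4 * L))).add
    (hhigh.div_const (4 * H))).congr_deriv ?_)
  ring

lemma convexOn_bClosedForm {L H : ℝ} (hL : 0 < L) (hH : 0 < H) :
    ConvexOn ℝ univ (bClosedForm L H) := by
  refine Monotone.convexOn_univ_of_deriv
    (fun x => (hasDerivAt_bClosedForm L H x).differentiableAt) ?_
  rw [funext fun x => (hasDerivAt_bClosedForm L H x).deriv]
  intro x y hxy
  have hclamp := monotone_max_add_zero_sub_max_sub_zero hL.le hxy
  have hhigh : max (x - H) 0 ≤ max (y - H) 0 := by gcongr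
  simp only at hclamp ⊢
  gcongr -1 + ?_ / _ + ?_ / _

section Regions

variable {L H u : ℝ}

lemma bClosedForm_of_le_neg (hL : 0 < L) (hLH : L ≤ H) (hu : u ≤ -L) :
    bClosedForm L H u = -u := by
  rw [bClosedForm, max_eq_right (by linarith), max_eq_right (by linarith),
    max_eq_right (by linarith)]
  ring

lemma bClosedForm_of_neg_le_of_le (hL : 0 < L) (hLH : L ≤ H) (hu₁ : -L ≤ u) (hu₂ : u ≤ L) :
    bClosedForm L H u = (L - u) ^ 2 / (4 * L) := by
  rw [bClosedForm, max_eq_left (by linarith), max_eq_right (by linarith),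
    max_eq_right (by linarith)]
  field_simp
  ring

lemma bClosedForm_of_mem_Icc (hL : 0 < L) (hu₁ : L ≤ u) (hu₂ : u ≤ H) :
    bClosedForm L H u = 0 := by
  rw [bClosedForm, max_eq_left (by linarith), max_eq_left (by linarith),
    max_eq_right (by linarith)]
  field_simp
  ring

lemma bClosedForm_of_le (hL : 0 < L) (hLH : L ≤ H) (hu : H ≤ u) :
    bClosedForm L H u = (u - H) ^ 2 / (4 * H) := by
  rw [bClosedForm, max_eq_left (by linarith), max_eq_left (by linarith),
    max_eq_left (by linarith)]
  field_simp
  ring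

lemma bClosedForm_pos (hL : 0 < L) (hLH : L ≤ H) (hu : u < L ∨ H < u) :
    0 < bClosedForm L H u := by
  rcases hu with hu | hu
  · rcases le_total u (-L) with hu' | hu'
    · rw [bClosedForm_of_le_neg hL hLH hu']
      linarith
    · rw [bClosedForm_of_neg_le_of_le hL hLH hu' hu.le]
      have : 0 < L - u := by linarith
      positivity
  · rw [bClosedForm_of_le hL hLH hu.le]
    have : 0 < u - H := by linarith
    have : 0 < H := by linarith
    positivity

lemma bClosedForm_eq_zero_iff (hL : 0 < L) (hLH : L ≤ H) :
    bClosedForm L H u = 0 ↔ L ≤ u ∧ u ≤ H := by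
  refine ⟨fun hzero => ?_, fun hu => bClosedForm_of_mem_Icc hL hu.1 hu.2⟩
  by_contra hu
  rw [not_and_or, not_le, not_le] at hu
  exact (bClosedForm_pos hL hLH hu).ne' hzero

end Regions

lemma eq_bClosedForm {σlow σhigh : ℝ} (hσ0 : 0 < σlow) (hσ : σlow ≤ σhigh) {a b : ℝ → ℝ}
    (ha : ∀ σ : ℝ, a σ = max (max ((σlow ^ 2 - σ ^ 2) / (2 * σlow)) 0)
      ((σ ^ 2 - σhigh ^ 2) / (2 * σhigh)))
    (hb1 : ∀ u : ℝ, u ≤ -σlow ^ 2 → b u = -u)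
    (hb2 : ∀ u : ℝ, -σlow ^ 2 < u → u < 0 → b u = (σlow ^ 2 - u) ^ 2 / (4 * σlow ^ 2))
    (hb3 : ∀ u : ℝ, 0 ≤ u → b u = (a (Real.sqrt u)) ^ 2) :
    b = bClosedForm (σlow ^ 2) (σhigh ^ 2) := by
  have hL : 0 < σlow ^ 2 := by positivity
  have hLH : σlow ^ 2 ≤ σhigh ^ 2 := by gcongr
  have hσh : 0 < σhigh := hσ0.trans_le hσ
  funext u
  rcases le_or_gt u (-σlow ^ 2) with hu | hu
  · rw [hb1 u hu, bClosedForm_of_le_neg hL hLH hu]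
  rcases lt_or_ge u 0 with hu₀ | hu₀
  · rw [hb2 u hu hu₀, bClosedForm_of_neg_le_of_le hL hLH hu.le (by linarith)]
  rw [hb3 u hu₀, ha, Real.sq_sqrt hu₀]
  rcases le_total u (σlow ^ 2) with hu₁ | hu₁
  · have hlow : 0 ≤ (σlow ^ 2 - u) / (2 * σlow) := div_nonneg (by linarith) (by positivity)
    have hhigh : (u - σhigh ^ 2) / (2 * σhigh) ≤ 0 :=
      div_nonpos_of_nonpos_of_nonneg (by linarith) (by positivity)
    rw [max_eq_left hlow, max_eq_left (hhigh.trans hlow),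
      bClosedForm_of_neg_le_of_le hL hLH hu.le hu₁]
    field_simp
    ring
  have hlow : (σlow ^ 2 - u) / (2 * σlow) ≤ 0 :=
    div_nonpos_of_nonpos_of_nonneg (by linarith) (by positivity)
  rw [max_eq_right hlow]
  rcases le_total u (σhigh ^ 2) with hu₂ | hu₂
  · rw [max_eq_left (div_nonpos_of_nonpos_of_nonneg (by linarith) (by positivity)),
      bClosedForm_of_mem_Icc hL hu₁ hu₂]
    norm_num
  · rw [max_eq_right (div_nonneg (by linarith) (by positivity)), bClosedForm_of_le hL hLH hu₂]
    field_simp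
    ring

/-- The function `b` of equation (3.35) of the paper is convex and vanishes exactly
on `[σ_low², σ_high²]`. -/
theorem stmt_18 (σlow σhigh : ℝ) (hσ0 : 0 < σlow) (hσ : σlow ≤ σhigh)
    (a b : ℝ → ℝ)
    (ha : ∀ σ : ℝ, a σ = max (max ((σlow ^ 2 - σ ^ 2) / (2 * σlow)) 0)
      ((σ ^ 2 - σhigh ^ 2) / (2 * σhigh)))
    (hb1 : ∀ u : ℝ, u ≤ -σlow ^ 2 → b u = -u)
    (hb2 : ∀ u : ℝ, -σlow ^ 2 < u → u < 0 → b u = (σlow ^ 2 - u) ^ 2 / (4 * σlow ^ 2))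
    (hb3 : ∀ u : ℝ, 0 ≤ u → b u = (a (Real.sqrt u)) ^ 2) :
    ConvexOn ℝ Set.univ b ∧ ∀ u : ℝ, (b u = 0 ↔ σlow ^ 2 ≤ u ∧ u ≤ σhigh ^ 2) := by
  have hL : 0 < σlow ^ 2 := by positivity
  have hLH : σlow ^ 2 ≤ σhigh ^ 2 := by gcongr
  rw [eq_bClosedForm hσ0 hσ ha hb1 hb2 hb3]
  exact ⟨convexOn_bClosedForm hL (hL.trans_le hLH), fun u => bClosedForm_eq_zero_iff hL hLH⟩
end
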